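/- arXiv:1301.0734 — 3 statements merged into one kernel-verified Lean document; each statement's English description precedes it below -/
import Mathlib

section
/- The collision frequency ν extends to a smooth function on ℝ³ and all of its partial derivatives are bounded: for every multi-index α with |α| ≥ 1 there exists a constant C_α such that |∂_ξ^α ν(ξ)| ≤ C_α for all ξ ∈ ℝ³. -/
open MeasureTheory
open scoped ENNReal NNReal Classical

noncomputable section

abbrev E3 : Type := EuclideanSpace ℝ (Fin 3)

/-- The hard-sphere collision frequency, extended continuously at `ξ = 0`. -/
def nu (ξ : E3) : ℝ :=
  if ξ = 0 then 3 / Real.sqrt (2 * Real.pi)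
  else (1 / Real.sqrt (2 * Real.pi)) *
    (2 * Real.exp (-‖ξ‖ ^ 2 / 2) +
      (‖ξ‖ + ‖ξ‖⁻¹) * ∫ u in (0:ℝ)..‖ξ‖, Real.exp (-u ^ 2 / 2))

/-- The hard-sphere collision kernel `W(ξ, ξ*)`. -/
def Wker (ξ ξs : E3) : ℝ :=
  2 / (Real.sqrt (2 * Real.pi) * ‖ξ - ξs‖) *
      Real.exp (-(‖ξ‖ ^ 2 - ‖ξs‖ ^ 2) ^ 2 / (8 * ‖ξ - ξs‖ ^ 2) - ‖ξ - ξs‖ ^ 2 / 8) -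
    ‖ξ - ξs‖ / 2 * Real.exp (-(‖ξ‖ ^ 2 + ‖ξs‖ ^ 2) / 4)

/-- The integral operator `K`. -/
def Kop (h : E3 → ℝ) (ξ : E3) : ℝ := ∫ ξs, Wker ξ ξs * h ξs

/-- A smooth cutoff `χ` with `0 ≤ χ ≤ 1`, `χ = 1` on `[-1,1]`, `supp χ ⊆ [-2,2]`. -/
def IsCutoff (χ : ℝ → ℝ) : Prop :=
  ContDiff ℝ (⊤ : ℕ∞) χ ∧ HasCompactSupport χ ∧ (∀ r, 0 ≤ χ r ∧ χ r ≤ 1) ∧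
    (∀ r ∈ Set.Icc (-1 : ℝ) 1, χ r = 1) ∧ Function.support χ ⊆ Set.Icc (-2 : ℝ) 2

/-- The singular part `K_s` of `K` (cutoff parameter `D`). -/
def Ks (χ : ℝ → ℝ) (ν₀ D : ℝ) (h : E3 → ℝ) (ξ : E3) : ℝ :=
  ∫ ξs, χ (‖ξ - ξs‖ / (D * ν₀)) * Wker ξ ξs * h ξs

/-- The regular part `K_r = K - K_s`. -/
def Kr (χ : ℝ → ℝ) (ν₀ D : ℝ) (h : E3 → ℝ) (ξ : E3) : ℝ := Kop h ξ - Ks χ ν₀ D h ξ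

/-- The weighted sup norm `‖h‖_{L^∞_{ξ,β}}`, valued in `ℝ≥0∞`. -/
def wnormInf (β : ℝ) (h : E3 → ℝ) : ℝ≥0∞ :=
  ⨆ ξ : E3, ENNReal.ofReal ((1 + ‖ξ‖) ^ β) * (‖h ξ‖₊ : ℝ≥0∞)

/-- `(1/ε)ℤ³`-periodicity in the space variable. -/
def PeriodicX (ε : ℝ) (g : E3 → E3 → ℝ) : Prop :=
  ∀ (k : Fin 3 → ℤ) (x ξ : E3),
    g (x + (EuclideanSpace.equiv (Fin 3) ℝ).symm (fun i => (k i : ℝ) / ε)) ξ = g x ξ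

/-- The fundamental cell `[0, 1/ε]³`. -/
def Cube (ε : ℝ) : Set E3 := {x | ∀ i, x i ∈ Set.Icc (0:ℝ) (1/ε)}

/-- The `L²_x L²_ξ` norm (`ℝ≥0∞`-valued); `‖g‖² = ε³ ∫_{[0,1/ε]³} ∫_{ℝ³} |g|² dξ dx`. -/
def L2L2 {F : Type*} [NormedAddCommGroup F] (ε : ℝ) (g : E3 → E3 → F) : ℝ≥0∞ :=
  (ENNReal.ofReal (ε ^ 3) * ∫⁻ x in Cube ε, ∫⁻ ξ, (‖g x ξ‖₊ : ℝ≥0∞) ^ 2) ^ (1/2 : ℝ)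

/-- The `L^∞_x L^∞_{ξ,β}` norm (`ℝ≥0∞`-valued). -/
def LinfLinf (β : ℝ) (g : E3 → E3 → ℝ) : ℝ≥0∞ :=
  ⨆ x : E3, ⨆ ξ : E3, ENNReal.ofReal ((1 + ‖ξ‖) ^ β) * (‖g x ξ‖₊ : ℝ≥0∞)

/-- The `H^s_x L²_ξ` norm: sum of `L²_x L²_ξ` norms of the `x`-derivatives up to order `s`. -/
def HsL2 {F : Type*} [NormedAddCommGroup F] [NormedSpace ℝ F] (ε : ℝ) (s : ℕ)
    (g : E3 → E3 → F) : ℝ≥0∞ :=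
  ∑ i ∈ Finset.range (s + 1), L2L2 ε fun x ξ => iteratedFDeriv ℝ i (fun y => g y ξ) x

/-- The `L²_x H^m_ξ` norm. -/
def L2Hj (ε : ℝ) (m : ℕ) (g : E3 → E3 → ℝ) : ℝ≥0∞ :=
  (ENNReal.ofReal (ε ^ 3) * ∫⁻ x in Cube ε,
    ∑ i ∈ Finset.range (m + 1), ∫⁻ ξ, (‖iteratedFDeriv ℝ i (g x) ξ‖₊ : ℝ≥0∞) ^ 2) ^ (1/2 : ℝ)

/-- The `L^∞_x L²_ξ` norm. -/
def LinfL2 (g : E3 → E3 → ℝ) : ℝ≥0∞ :=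
  ⨆ x : E3, (∫⁻ ξ, (‖g x ξ‖₊ : ℝ≥0∞) ^ 2) ^ (1/2 : ℝ)

/-- Solution operator of the damped transport equation. -/
def Sop (t : ℝ) (g : E3 → E3 → ℝ) (x ξ : E3) : ℝ := Real.exp (-nu ξ * t) * g (x - t • ξ) ξ

/-- The global Maxwellian `w`. -/
def maxwellian (ξ : E3) : ℝ := (2 * Real.pi) ^ (-(3:ℝ)/2) * Real.exp (-‖ξ‖ ^ 2 / 2)

/-- Zero mean conditions for the initial datum. -/
def ZeroMean (ε : ℝ) (I : E3 → E3 → ℝ) : Prop :=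
  (∫ x in Cube ε, ∫ ξ, Real.sqrt (maxwellian ξ) * I x ξ) = 0 ∧
  (∀ i : Fin 3, (∫ x in Cube ε, ∫ ξ, Real.sqrt (maxwellian ξ) * ξ i * I x ξ) = 0) ∧
  (∫ x in Cube ε, ∫ ξ, Real.sqrt (maxwellian ξ) * ‖ξ‖ ^ 2 * I x ξ) = 0

/-- Euclidean norm of an integer lattice vector. -/
def znorm (k : Fin 3 → ℤ) : ℝ := Real.sqrt (∑ i, ((k i : ℝ)) ^ 2)

/-- The `k`-th Fourier coefficient in `x`. -/
def fourierCoef (ε : ℝ) (g : E3 → ℝ) (k : Fin 3 → ℤ) : ℂ :=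
  (ε : ℂ) ^ 3 * ∫ x in Cube ε,
    (g x : ℂ) * Complex.exp (-2 * (Real.pi : ℂ) * Complex.I * (ε : ℂ) * ∑ i, (k i : ℂ) * (x i : ℂ))

/-- The short wave (high frequency) part `Σ_{ε|k|>δ} f̂_k e^{2πiεk·x}`. -/
def shortWave (ε δ : ℝ) (g : E3 → E3 → ℝ) (x ξ : E3) : ℂ :=
  ∑' k : Fin 3 → ℤ,
    if δ < ε * znorm k then
      fourierCoef ε (fun y => g y ξ) k *
        Complex.exp (2 * (Real.pi : ℂ) * Complex.I * (ε : ℂ) * ∑ i, (k i : ℂ) * (x i : ℂ))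
    else 0

/-- The long wave (low frequency) part `Σ_{ε|k|<δ} f̂_k e^{2πiεk·x}`. -/
def longWave (ε δ : ℝ) (g : E3 → E3 → ℝ) (x ξ : E3) : ℂ :=
  ∑' k : Fin 3 → ℤ,
    if ε * znorm k < δ then
      fourierCoef ε (fun y => g y ξ) k *
        Complex.exp (2 * (Real.pi : ℂ) * Complex.I * (ε : ℂ) * ∑ i, (k i : ℂ) * (x i : ℂ))
    else 0

/-- `K` acting in the `ξ` variable on functions of `(x, ξ)`. -/
def opK (g : E3 → E3 → ℝ) (x ξ : E3) : ℝ := Kop (g x) ξ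

/-- The first mixture operator `M₁^t`. -/
def M1op (t : ℝ) (f₀ : E3 → E3 → ℝ) (x ξ : E3) : ℝ :=
  ∫ s₁ in (0:ℝ)..t, ∫ s₂ in (0:ℝ)..s₁,
    Sop (t - s₁) (opK (Sop (s₁ - s₂) (opK (Sop s₂ f₀)))) x ξ

/-- The second mixture operator `M₂^t`. -/
def M2op (t : ℝ) (f₀ : E3 → E3 → ℝ) (x ξ : E3) : ℝ :=
  ∫ s₁ in (0:ℝ)..t, ∫ s₂ in (0:ℝ)..s₁, ∫ s₃ in (0:ℝ)..s₂, ∫ s₄ in (0:ℝ)..s₃,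
    Sop (t - s₁) (opK (Sop (s₁ - s₂) (opK (Sop (s₂ - s₃)
      (opK (Sop (s₃ - s₄) (opK (Sop s₄ f₀)))))))) x ξ

/-- The `i`-th component of `D_t = t∇_x + ∇_ξ` applied to `g`. -/
def Dt (t : ℝ) (g : E3 → E3 → ℝ) (i : Fin 3) (x ξ : E3) : ℝ :=
  t * fderiv ℝ (fun y => g y ξ) x (EuclideanSpace.single i (1:ℝ)) +
    fderiv ℝ (g x) ξ (EuclideanSpace.single i (1:ℝ))

section NuAuxSection
open Real

namespace NuAux

def cst : ℝ := 1 / Real.sqrt (2 * Real.pi)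

lemma cst_pos : 0 < cst := by
  have : 0 < Real.sqrt (2 * Real.pi) := Real.sqrt_pos.2 (by positivity)
  exact div_pos one_pos this

def gg (k : ℕ) (s : ℝ) : ℝ :=
  ∫ v in (0:ℝ)..1, (-v ^ 2 / 2) ^ k * Real.exp (-(s * v ^ 2) / 2)

def ggc (k : ℕ) (z : ℂ) : ℂ :=
  ∫ v in (0:ℝ)..1, (-(v : ℂ) ^ 2 / 2) ^ k * Complex.exp (-(z * (v : ℂ) ^ 2) / 2)

lemma cont_integrand (k : ℕ) (x : ℝ) :
    Continuous fun v : ℝ => (-v ^ 2 / 2) ^ k * Real.exp (-(x * v ^ 2) / 2) := by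
  fun_prop

lemma hasDerivAt_gg (k : ℕ) (s : ℝ) : HasDerivAt (gg k) (gg (k + 1) s) s := by
  have H := intervalIntegral.hasDerivAt_integral_of_dominated_loc_of_deriv_le
      (F := fun (x : ℝ) (v : ℝ) => (-v ^ 2 / 2) ^ k * Real.exp (-(x * v ^ 2) / 2))
      (F' := fun (x : ℝ) (v : ℝ) => (-v ^ 2 / 2) ^ (k + 1) * Real.exp (-(x * v ^ 2) / 2))
      (bound := fun _ : ℝ => Real.exp ((|s| + 1) / 2))
      (a := 0) (b := 1) (x₀ := s) (μ := MeasureTheory.volume) (Metric.ball_mem_nhds s one_pos)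
      (Filter.Eventually.of_forall fun x => (cont_integrand k x).aestronglyMeasurable)
      ((cont_integrand k s).intervalIntegrable 0 1)
      ((cont_integrand (k+1) s).aestronglyMeasurable)
      (Filter.Eventually.of_forall ?_)
      (intervalIntegrable_const)
      (Filter.Eventually.of_forall ?_)
  · exact H.2
  · -- bound
    intro v hv x hx
    rw [Set.uIoc_of_le (by norm_num : (0:ℝ) ≤ 1)] at hv
    have hv0 : 0 < v := hv.1
    have hv1 : v ≤ 1 := hv.2
    have habs : |x| ≤ |s| + 1 := by
      have := mem_ball_iff_norm.mp hx
      have h2 : |x - s| < 1 := by simpa [Real.norm_eq_abs] using this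
      calc |x| = |s + (x - s)| := by ring_nf
        _ ≤ |s| + |x - s| := abs_add_le _ _
        _ ≤ |s| + 1 := by linarith [le_of_lt h2]
    have hval : ‖(-v ^ 2 / 2) ^ (k+1) * Real.exp (-(x * v ^ 2) / 2)‖
        = (v ^ 2 / 2) ^ (k+1) * Real.exp (-(x * v ^ 2) / 2) := by
      rw [norm_mul, norm_pow, Real.norm_eq_abs, Real.norm_eq_abs, Real.abs_exp,
        abs_div, abs_neg, abs_of_nonneg (by positivity : (0:ℝ) ≤ v ^ 2)]
      norm_num
    rw [hval]
    have h1 : (v ^ 2 / 2) ^ (k+1) ≤ 1 := by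
      apply pow_le_one₀ (by positivity)
      nlinarith
    have h2 : Real.exp (-(x * v ^ 2) / 2) ≤ Real.exp ((|s| + 1) / 2) := by
      apply Real.exp_le_exp.2
      have : -(x * v ^ 2) ≤ |x| * v ^ 2 := by
        have := neg_abs_le (x * v ^ 2)
        calc -(x * v ^ 2) ≤ |x * v ^ 2| := by
              rw [← abs_neg]; exact le_abs_self _
          _ = |x| * v ^ 2 := by rw [abs_mul, abs_of_nonneg (by positivity : (0:ℝ) ≤ v ^ 2)]
      have hv2 : v ^ 2 ≤ 1 := by nlinarith
      have h3 : |x| * v ^ 2 ≤ |x| := by nlinarith [abs_nonneg x]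
      have : -(x * v ^ 2) ≤ |s| + 1 := le_trans this (le_trans h3 habs)
      linarith
    calc (v ^ 2 / 2) ^ (k+1) * Real.exp (-(x * v ^ 2) / 2)
        ≤ 1 * Real.exp ((|s| + 1) / 2) := by
          exact mul_le_mul h1 h2 (Real.exp_nonneg _) (by norm_num)
      _ = Real.exp ((|s| + 1) / 2) := one_mul _
  · -- differentiability
    intro v hv x hx
    have h1 : HasDerivAt (fun x : ℝ => -(x * v ^ 2) / 2) (-(v ^ 2) / 2) x := by
      simpa using ((hasDerivAt_mul_const (v ^ 2) (x := x)).neg.div_const 2)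
    have h2 := (h1.exp).const_mul ((-v ^ 2 / 2) ^ k)
    refine h2.congr_deriv ?_
    ring


lemma cont_integrandc (k : ℕ) (x : ℂ) :
    Continuous fun v : ℝ => (-(v : ℂ) ^ 2 / 2) ^ k * Complex.exp (-(x * (v : ℂ) ^ 2) / 2) := by
  fun_prop

lemma hasDerivAt_ggc (k : ℕ) (z : ℂ) : HasDerivAt (ggc k) (ggc (k + 1) z) z := by
  have H := intervalIntegral.hasDerivAt_integral_of_dominated_loc_of_deriv_le
      (F := fun (x : ℂ) (v : ℝ) => (-(v:ℂ) ^ 2 / 2) ^ k * Complex.exp (-(x * (v:ℂ) ^ 2) / 2))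
      (F' := fun (x : ℂ) (v : ℝ) => (-(v:ℂ) ^ 2 / 2) ^ (k + 1) * Complex.exp (-(x * (v:ℂ) ^ 2) / 2))
      (bound := fun _ : ℝ => Real.exp ((‖z‖ + 1) / 2))
      (a := 0) (b := 1) (x₀ := z) (μ := MeasureTheory.volume) (Metric.ball_mem_nhds z one_pos)
      (Filter.Eventually.of_forall fun x => (cont_integrandc k x).aestronglyMeasurable)
      ((cont_integrandc k z).intervalIntegrable 0 1)
      ((cont_integrandc (k+1) z).aestronglyMeasurable)
      (Filter.Eventually.of_forall ?_)
      (intervalIntegrable_const)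
      (Filter.Eventually.of_forall ?_)
  · exact H.2
  · intro v hv x hx
    rw [Set.uIoc_of_le (by norm_num : (0:ℝ) ≤ 1)] at hv
    have hv0 : 0 < v := hv.1
    have hv1 : v ≤ 1 := hv.2
    have hv2 : v ^ 2 ≤ 1 := by nlinarith
    have habs : ‖x‖ ≤ ‖z‖ + 1 := by
      have h2 : ‖x - z‖ < 1 := mem_ball_iff_norm.mp hx
      calc ‖x‖ = ‖z + (x - z)‖ := by ring_nf
        _ ≤ ‖z‖ + ‖x - z‖ := norm_add_le _ _
        _ ≤ ‖z‖ + 1 := by linarith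
    have hre : (-(x * (v:ℂ) ^ 2) / 2).re ≤ (‖z‖ + 1) / 2 := by
      have h1 : (-(x * (v:ℂ) ^ 2) / 2).re = -(x.re * v ^ 2) / 2 := by
        simp [Complex.div_re, Complex.neg_re, Complex.mul_re, ← Complex.ofReal_pow]
      rw [h1]
      have h2 : -(x.re * v ^ 2) ≤ |x.re| * v ^ 2 := by
        calc -(x.re * v ^ 2) ≤ |x.re * v ^ 2| := by rw [← abs_neg]; exact le_abs_self _
          _ = |x.re| * v ^ 2 := by rw [abs_mul, abs_of_nonneg (by positivity : (0:ℝ) ≤ v ^ 2)]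
      have h3 : |x.re| ≤ ‖x‖ := Complex.abs_re_le_norm x
      have h4 : |x.re| * v ^ 2 ≤ |x.re| := by nlinarith [abs_nonneg x.re]
      linarith
    have hval : ‖(-(v:ℂ) ^ 2 / 2) ^ (k+1) * Complex.exp (-(x * (v:ℂ) ^ 2) / 2)‖
        = (v ^ 2 / 2) ^ (k+1) * Real.exp ((-(x * (v:ℂ) ^ 2) / 2).re) := by
      rw [norm_mul, norm_pow, Complex.norm_exp]
      congr 2
      have : (-(v:ℂ) ^ 2 / 2) = (((-v ^ 2 / 2 : ℝ)) : ℂ) := by push_cast; ring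
      rw [this, Complex.norm_real, Real.norm_eq_abs, abs_div, abs_neg,
        abs_of_nonneg (by positivity : (0:ℝ) ≤ v ^ 2)]
      norm_num
    rw [hval]
    have h1 : (v ^ 2 / 2) ^ (k+1) ≤ 1 := by
      apply pow_le_one₀ (by positivity)
      nlinarith
    have h5 := mul_le_mul h1 (Real.exp_le_exp.2 hre) (Real.exp_nonneg _) zero_le_one
    linarith
  · intro v hv x hx
    have h1 : HasDerivAt (fun x : ℂ => -(x * (v:ℂ) ^ 2) / 2) (-((v:ℂ) ^ 2) / 2) x := by
      simpa using ((hasDerivAt_mul_const ((v:ℂ) ^ 2) (x := x)).neg.div_const 2)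
    have h2 := (h1.cexp).const_mul ((-(v:ℂ) ^ 2 / 2) ^ k)
    refine h2.congr_deriv ?_
    ring

lemma gg_eq_re (k : ℕ) (s : ℝ) : ggc k (s : ℂ) = ((gg k s : ℝ) : ℂ) := by
  rw [ggc, gg, ← intervalIntegral.integral_ofReal]
  refine intervalIntegral.integral_congr fun v hv => ?_
  push_cast [Complex.ofReal_exp]
  norm_num

lemma contDiff_gg (k : ℕ) : ContDiff ℝ (⊤ : ℕ∞) (gg k) := by
  have hd : Differentiable ℂ (ggc k) := fun z => (hasDerivAt_ggc k z).differentiableAt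
  have ha : AnalyticOnNhd ℂ (ggc k) Set.univ :=
    hd.differentiableOn.analyticOnNhd isOpen_univ
  have heq : gg k = Complex.reCLM ∘ ggc k ∘ Complex.ofRealCLM := by
    funext s
    simp only [Function.comp_apply, Complex.ofRealCLM_apply, gg_eq_re, Complex.ofReal_re,
      Complex.reCLM_apply]
  rw [heq]
  exact Complex.reCLM.contDiff.comp ((ha.restrictScalars.contDiff).comp Complex.ofRealCLM.contDiff)


def AA (k : ℕ) : ℝ := (k.factorial : ℝ) * 2 ^ (k + 1) * Real.sqrt Real.pi

lemma AA_nonneg (k : ℕ) : 0 ≤ AA k := by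
  unfold AA; positivity

lemma pow_mul_exp_le (k : ℕ) {x : ℝ} (hx : 0 ≤ x) : x ^ k * Real.exp (-x) ≤ k.factorial := by
  have h := Real.pow_div_factorial_le_exp x hx k
  have hfac : (0:ℝ) < k.factorial := by positivity
  rw [div_le_iff₀ hfac] at h
  have hexp : 0 < Real.exp x := Real.exp_pos x
  rw [Real.exp_neg]
  rw [mul_inv_le_iff₀ hexp]
  linarith [h]

lemma gauss_tail_le {s : ℝ} (hs : 0 < s) :
    (∫ v in (0:ℝ)..1, Real.exp (-(s * v ^ 2) / 4)) ≤ 2 * Real.sqrt Real.pi / Real.sqrt s := by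
  have h4 : (0:ℝ) < s / 4 := by linarith
  have hint : MeasureTheory.Integrable (fun v : ℝ => Real.exp (-(s / 4) * v ^ 2)) :=
    integrable_exp_neg_mul_sq h4
  have heq : ∀ v : ℝ, Real.exp (-(s * v ^ 2) / 4) = Real.exp (-(s / 4) * v ^ 2) := by
    intro v; congr 1; ring
  rw [intervalIntegral.integral_of_le (by norm_num : (0:ℝ) ≤ 1)]
  calc (∫ v in Set.Ioc (0:ℝ) 1, Real.exp (-(s * v ^ 2) / 4))
      = ∫ v in Set.Ioc (0:ℝ) 1, Real.exp (-(s / 4) * v ^ 2) := by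
        simp_rw [heq]
    _ ≤ ∫ v : ℝ, Real.exp (-(s / 4) * v ^ 2) :=
        MeasureTheory.setIntegral_le_integral hint
          (Filter.Eventually.of_forall fun v => Real.exp_nonneg _)
    _ = Real.sqrt (Real.pi / (s / 4)) := integral_gaussian (s / 4)
    _ = 2 * Real.sqrt Real.pi / Real.sqrt s := by
        rw [show Real.pi / (s / 4) = 4 * Real.pi / s by ring]
        rw [Real.sqrt_div (by positivity : (0:ℝ) ≤ 4 * Real.pi)]
        rw [show (4:ℝ) * Real.pi = 2 ^ 2 * Real.pi by norm_num]
        rw [Real.sqrt_mul (by positivity : (0:ℝ) ≤ (2:ℝ) ^ 2)]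
        rw [Real.sqrt_sq (by norm_num : (0:ℝ) ≤ 2)]

lemma gg_abs_le (k : ℕ) {s : ℝ} (hs : 1 ≤ s) :
    |gg k s| ≤ AA k / (s ^ k * Real.sqrt s) := by
  have hs0 : 0 < s := lt_of_lt_of_le one_pos hs
  have hsq : 0 < Real.sqrt s := Real.sqrt_pos.2 hs0
  have key : ∀ v ∈ Set.uIoc (0:ℝ) 1,
      ‖(-v ^ 2 / 2) ^ k * Real.exp (-(s * v ^ 2) / 2)‖
        ≤ ((k.factorial : ℝ) * 2 ^ k / s ^ k) * Real.exp (-(s * v ^ 2) / 4) := by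
    intro v hv
    have hval : ‖(-v ^ 2 / 2) ^ k * Real.exp (-(s * v ^ 2) / 2)‖
        = (v ^ 2 / 2) ^ k * Real.exp (-(s * v ^ 2) / 2) := by
      rw [norm_mul, norm_pow, Real.norm_eq_abs, Real.norm_eq_abs, Real.abs_exp,
        abs_div, abs_neg, abs_of_nonneg (by positivity : (0:ℝ) ≤ v ^ 2)]
      norm_num
    rw [hval]
    have hx : 0 ≤ s * v ^ 2 / 4 := by positivity
    have h1 : (s * v ^ 2 / 4) ^ k * Real.exp (-(s * v ^ 2 / 4)) ≤ k.factorial :=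
      pow_mul_exp_le k hx
    -- (v^2/2)^k = (2/s)^k * (s v^2/4)^k
    have h2 : (v ^ 2 / 2) ^ k = (2 / s) ^ k * (s * v ^ 2 / 4) ^ k := by
      rw [← mul_pow]; congr 1; field_simp; ring
    have h3 : Real.exp (-(s * v ^ 2) / 2)
        = Real.exp (-(s * v ^ 2 / 4)) * Real.exp (-(s * v ^ 2) / 4) := by
      rw [← Real.exp_add]; congr 1; ring
    rw [h2, h3]
    have h4 : (2 / s) ^ k * ((s * v ^ 2 / 4) ^ k * Real.exp (-(s * v ^ 2 / 4)))
        ≤ (2 / s) ^ k * k.factorial := by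
      apply mul_le_mul_of_nonneg_left h1 (by positivity)
    calc (2 / s) ^ k * (s * v ^ 2 / 4) ^ k * (Real.exp (-(s * v ^ 2 / 4)) * Real.exp (-(s * v ^ 2) / 4))
        = ((2 / s) ^ k * ((s * v ^ 2 / 4) ^ k * Real.exp (-(s * v ^ 2 / 4)))) * Real.exp (-(s * v ^ 2) / 4) := by ring
      _ ≤ ((2 / s) ^ k * k.factorial) * Real.exp (-(s * v ^ 2) / 4) := by
          apply mul_le_mul_of_nonneg_right h4 (Real.exp_nonneg _)
      _ = ((k.factorial : ℝ) * 2 ^ k / s ^ k) * Real.exp (-(s * v ^ 2) / 4) := by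
          rw [div_pow]; ring
  have hbI : IntervalIntegrable (fun v : ℝ => ((k.factorial : ℝ) * 2 ^ k / s ^ k) * Real.exp (-(s * v ^ 2) / 4)) MeasureTheory.volume 0 1 := by
    apply Continuous.intervalIntegrable
    fun_prop
  have h0 := intervalIntegral.norm_integral_le_abs_of_norm_le
      (f := fun v : ℝ => (-v ^ 2 / 2) ^ k * Real.exp (-(s * v ^ 2) / 2))
      (g := fun v : ℝ => ((k.factorial : ℝ) * 2 ^ k / s ^ k) * Real.exp (-(s * v ^ 2) / 4))
      (a := 0) (b := 1) (μ := MeasureTheory.volume)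
      ((MeasureTheory.ae_restrict_iff' measurableSet_uIoc).2 (Filter.Eventually.of_forall key)) hbI
  rw [Real.norm_eq_abs] at h0
  have hnn : 0 ≤ ∫ v in (0:ℝ)..1, Real.exp (-(s * v ^ 2) / 4) :=
    intervalIntegral.integral_nonneg (by norm_num) (fun v _ => Real.exp_nonneg _)
  have h5 : (∫ v in (0:ℝ)..1, ((k.factorial : ℝ) * 2 ^ k / s ^ k) * Real.exp (-(s * v ^ 2) / 4))
      = ((k.factorial : ℝ) * 2 ^ k / s ^ k) * ∫ v in (0:ℝ)..1, Real.exp (-(s * v ^ 2) / 4) := by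
    rw [intervalIntegral.integral_const_mul]
  have h6 := gauss_tail_le hs0
  have hc : (0:ℝ) ≤ (k.factorial : ℝ) * 2 ^ k / s ^ k := by positivity
  calc |gg k s| ≤ _ := h0
    _ = ((k.factorial : ℝ) * 2 ^ k / s ^ k) * ∫ v in (0:ℝ)..1, Real.exp (-(s * v ^ 2) / 4) := by
        rw [h5, abs_of_nonneg (mul_nonneg hc hnn)]
    _ ≤ ((k.factorial : ℝ) * 2 ^ k / s ^ k) * (2 * Real.sqrt Real.pi / Real.sqrt s) :=
        mul_le_mul_of_nonneg_left h6 hc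
    _ = AA k / (s ^ k * Real.sqrt s) := by
        unfold AA
        field_simp
        ring


def pp (i : ℕ) (s : ℝ) : ℝ :=
  2 * cst * ((-2⁻¹ : ℝ) ^ i * (-Real.exp (-s / 2)) + ((i : ℝ) + 1) * gg i s + (1 + s) * gg (i + 1) s)

def hh (s : ℝ) : ℝ := cst * (2 * Real.exp (-s / 2) + (1 + s) * gg 0 s)

lemma hasDerivAt_negexp (s : ℝ) :
    HasDerivAt (fun s : ℝ => Real.exp (-s / 2)) (Real.exp (-s / 2) * (-2⁻¹)) s := by
  have h1 : HasDerivAt (fun s : ℝ => -s / 2) (-2⁻¹ : ℝ) s := by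
    have := (hasDerivAt_id s).neg.div_const 2
    norm_num at this ⊢
    exact this
  exact h1.exp

lemma hasDerivAt_pp (i : ℕ) (s : ℝ) : HasDerivAt (pp i) (pp (i + 1) s) s := by
  have h2 := ((hasDerivAt_negexp s).neg.const_mul ((-2⁻¹ : ℝ) ^ i))
  have h3 := (hasDerivAt_gg i s).const_mul ((i : ℝ) + 1)
  have h4 : HasDerivAt (fun s : ℝ => 1 + s) 1 s := by simpa using (hasDerivAt_id s).const_add 1
  have h5 := h4.mul (hasDerivAt_gg (i + 1) s)
  have h6 := ((h2.add h3).add h5).const_mul (2 * cst)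
  refine h6.congr_deriv ?_
  unfold pp
  push_cast
  ring

lemma hasDerivAt_hh (s : ℝ) : HasDerivAt hh (pp 0 s / 2) s := by
  have h2 := (hasDerivAt_negexp s).const_mul 2
  have h4 : HasDerivAt (fun s : ℝ => 1 + s) 1 s := by simpa using (hasDerivAt_id s).const_add 1
  have h5 := h4.mul (hasDerivAt_gg 0 s)
  have h6 := (h2.add h5).const_mul cst
  refine h6.congr_deriv ?_
  unfold pp
  push_cast
  ring

lemma contDiff_pp (i : ℕ) : ContDiff ℝ (⊤ : ℕ∞) (pp i) := by
  unfold pp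
  apply ContDiff.mul contDiff_const
  apply ContDiff.add
  apply ContDiff.add
  · exact contDiff_const.mul (Real.contDiff_exp.comp ((contDiff_id (E := ℝ)).neg.div_const 2)).neg
  · exact contDiff_const.mul (contDiff_gg i)
  · exact (contDiff_const.add contDiff_id).mul (contDiff_gg (i + 1))

lemma contDiff_hh : ContDiff ℝ (⊤ : ℕ∞) hh := by
  unfold hh
  apply ContDiff.mul contDiff_const
  apply ContDiff.add
  · exact contDiff_const.mul (Real.contDiff_exp.comp ((contDiff_id (E := ℝ)).neg.div_const 2))
  · exact (contDiff_const.add contDiff_id).mul (contDiff_gg 0)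

lemma iteratedDeriv_pp0 : ∀ i : ℕ, iteratedDeriv i (pp 0) = pp i := by
  intro i
  induction i with
  | zero => simp [iteratedDeriv_zero]
  | succ i ih =>
    rw [iteratedDeriv_succ, ih]
    funext s
    exact (hasDerivAt_pp i s).deriv

def BB (i : ℕ) : ℝ :=
  2 * cst * (((i + 1).factorial : ℝ) * 2 ^ (i + 1) + ((i : ℝ) + 1) * AA i + 2 * AA (i + 1))

lemma BB_nonneg (i : ℕ) : 0 ≤ BB i := by
  have := cst_pos
  have := AA_nonneg i
  have := AA_nonneg (i + 1)
  unfold BB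
  positivity

lemma exp_neg_le (i : ℕ) {s : ℝ} (hs : 1 ≤ s) :
    Real.exp (-s / 2) ≤ (((i + 1).factorial : ℝ) * 2 ^ (i + 1)) / (s ^ i * Real.sqrt s) := by
  have hs0 : 0 < s := lt_of_lt_of_le one_pos hs
  have hsq : 0 < Real.sqrt s := Real.sqrt_pos.2 hs0
  have h1 : (s / 2) ^ (i + 1) * Real.exp (-(s / 2)) ≤ (i + 1).factorial :=
    pow_mul_exp_le (i + 1) (by positivity)
  have h2 : s ^ (i + 1) * Real.exp (-(s / 2)) ≤ ((i + 1).factorial : ℝ) * 2 ^ (i + 1) := by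
    rw [div_pow, div_mul_eq_mul_div, div_le_iff₀ (by positivity : (0:ℝ) < 2 ^ (i + 1))] at h1
    linarith
  have h3 : Real.exp (-s / 2) ≤ (((i + 1).factorial : ℝ) * 2 ^ (i + 1)) / s ^ (i + 1) := by
    rw [le_div_iff₀ (by positivity), show -s / 2 = -(s / 2) by ring]
    nlinarith [h2]
  have h4 : s ^ i * Real.sqrt s ≤ s ^ (i + 1) := by
    have hss : Real.sqrt s ≤ s := by
      calc Real.sqrt s ≤ Real.sqrt (s ^ 2) := Real.sqrt_le_sqrt (by nlinarith)
        _ = s := Real.sqrt_sq hs0.le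
    calc s ^ i * Real.sqrt s ≤ s ^ i * s :=
          mul_le_mul_of_nonneg_left hss (by positivity)
      _ = s ^ (i + 1) := (pow_succ s i).symm
  refine h3.trans ?_
  gcongr

lemma pp_abs_le (i : ℕ) {s : ℝ} (hs : 1 ≤ s) :
    |pp i s| ≤ BB i / (s ^ i * Real.sqrt s) := by
  have hs0 : 0 < s := lt_of_lt_of_le one_pos hs
  have hsq : 0 < Real.sqrt s := Real.sqrt_pos.2 hs0
  have hd : 0 < s ^ i * Real.sqrt s := by positivity
  have e1 : |(-2⁻¹ : ℝ) ^ i * (-Real.exp (-s / 2))|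
      ≤ (((i + 1).factorial : ℝ) * 2 ^ (i + 1)) / (s ^ i * Real.sqrt s) := by
    simp only [abs_mul, abs_pow, abs_neg, Real.abs_exp]
    have hp : |(2⁻¹ : ℝ)| ^ i ≤ 1 := by
      apply pow_le_one₀ (abs_nonneg _)
      rw [abs_of_nonneg (by norm_num : (0:ℝ) ≤ 2⁻¹)]
      norm_num
    calc |(2⁻¹ : ℝ)| ^ i * Real.exp (-s / 2) ≤ 1 * Real.exp (-s / 2) :=
          mul_le_mul_of_nonneg_right hp (Real.exp_nonneg _)
      _ = Real.exp (-s / 2) := one_mul _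
      _ ≤ _ := exp_neg_le i hs
  have e2 : |((i : ℝ) + 1) * gg i s| ≤ (((i : ℝ) + 1) * AA i) / (s ^ i * Real.sqrt s) := by
    rw [abs_mul, abs_of_nonneg (by positivity : (0:ℝ) ≤ (i : ℝ) + 1), mul_div_assoc]
    exact mul_le_mul_of_nonneg_left (gg_abs_le i hs) (by positivity)
  have e3 : |(1 + s) * gg (i + 1) s| ≤ (2 * AA (i + 1)) / (s ^ i * Real.sqrt s) := by
    rw [abs_mul, abs_of_nonneg (by linarith : (0:ℝ) ≤ 1 + s)]
    have hg := gg_abs_le (i + 1) hs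
    calc (1 + s) * |gg (i + 1) s|
        ≤ (2 * s) * (AA (i + 1) / (s ^ (i + 1) * Real.sqrt s)) := by
          apply mul_le_mul (by linarith) hg (abs_nonneg _) (by linarith)
      _ = (2 * AA (i + 1)) / (s ^ i * Real.sqrt s) := by
          rw [pow_succ]
          field_simp
  have habs : |pp i s| ≤ 2 * cst * (|(-2⁻¹ : ℝ) ^ i * (-Real.exp (-s / 2))|
      + |((i : ℝ) + 1) * gg i s| + |(1 + s) * gg (i + 1) s|) := by
    unfold pp
    rw [abs_mul, abs_of_nonneg (by linarith [cst_pos] : (0:ℝ) ≤ 2 * cst)]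
    apply mul_le_mul_of_nonneg_left _ (by linarith [cst_pos])
    exact (abs_add_le _ _).trans (by gcongr; exact abs_add_le _ _)
  refine habs.trans ?_
  have hsum := add_le_add (add_le_add e1 e2) e3
  calc 2 * cst * (|(-2⁻¹ : ℝ) ^ i * (-Real.exp (-s / 2))|
      + |((i : ℝ) + 1) * gg i s| + |(1 + s) * gg (i + 1) s|)
      ≤ 2 * cst * ((((i + 1).factorial : ℝ) * 2 ^ (i + 1)) / (s ^ i * Real.sqrt s)
        + (((i : ℝ) + 1) * AA i) / (s ^ i * Real.sqrt s)
        + (2 * AA (i + 1)) / (s ^ i * Real.sqrt s)) :=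
        mul_le_mul_of_nonneg_left hsum (by linarith [cst_pos])
    _ = BB i / (s ^ i * Real.sqrt s) := by
        unfold BB
        rw [← add_div, ← add_div, ← mul_div_assoc]


-- ### geometry on E3

def toDualIso : E3 →ₗᵢ[ℝ] (E3 →L[ℝ] ℝ) where
  toLinearMap :=
    { toFun := fun ξ => innerSL ℝ ξ
      map_add' := fun x y => by ext z; simp [inner_add_left]
      map_smul' := fun c x => by ext z; simp [real_inner_smul_left] }
  norm_map' := fun x => innerSL_apply_norm ℝ x

@[simp] lemma toDualIso_apply (ξ y : E3) : toDualIso ξ y = inner ℝ ξ y := rfl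

lemma clm_deriv_bound {F : Type*} [NormedAddCommGroup F] [NormedSpace ℝ F]
    (L : E3 →L[ℝ] F) {i : ℕ} (hi : 1 ≤ i) (ξ : E3) :
    ‖iteratedFDeriv ℝ i (fun η => L η) ξ‖ ≤ ‖L‖ := by
  obtain ⟨j, rfl⟩ : ∃ j, i = j + 1 := ⟨i - 1, (Nat.succ_pred_eq_of_pos hi).symm⟩
  rw [← norm_iteratedFDeriv_fderiv]
  have hfd : (fderiv ℝ (fun η : E3 => L η)) = fun _ => L := by
    funext η; exact L.fderiv
  rw [hfd]
  match j with
  | 0 => simp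
  | j + 1 =>
    rw [iteratedFDeriv_const_of_ne (Nat.succ_ne_zero j)]
    simpa using norm_nonneg L

def qq : E3 → ℝ := fun η => ‖η‖ ^ 2

lemma fderiv_qq (ξ : E3) : fderiv ℝ qq ξ = 2 • innerSL ℝ ξ :=
  (hasStrictFDerivAt_norm_sq ξ).hasFDerivAt.fderiv

lemma qq_deriv_bound {i : ℕ} (hi : 1 ≤ i) (ξ : E3) :
    ‖iteratedFDeriv ℝ i qq ξ‖ ≤ 2 * max ‖ξ‖ 1 := by
  match i with
  | 1 =>
    have h0 : ‖iteratedFDeriv ℝ 0 (fderiv ℝ qq) ξ‖ = ‖iteratedFDeriv ℝ 1 qq ξ‖ :=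
      norm_iteratedFDeriv_fderiv
    rw [← h0, norm_iteratedFDeriv_zero, fderiv_qq]
    have : ‖(2 : ℕ) • innerSL ℝ ξ‖ = 2 * ‖ξ‖ := by
      rw [← Nat.cast_smul_eq_nsmul ℝ, norm_smul]
      simp [innerSL_apply_norm]
    rw [this]
    have : ‖ξ‖ ≤ max ‖ξ‖ 1 := le_max_left _ _
    nlinarith [le_max_left ‖ξ‖ 1]
  | i + 2 =>
    rw [← norm_iteratedFDeriv_fderiv]
    have hfd : (fderiv ℝ qq) = ⇑toDualIso ∘ (fun η : E3 => (2 : ℝ) • η) := by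
      funext η
      rw [fderiv_qq]
      ext y
      simp [real_inner_smul_left, two_smul, inner_add_left]
    rw [hfd]
    have hsm : ContDiff ℝ (⊤ : ℕ∞) (fun η : E3 => (2 : ℝ) • η) := contDiff_id.const_smul (2 : ℝ)
    rw [toDualIso.norm_iteratedFDeriv_comp_left hsm.contDiffAt (by exact_mod_cast le_top)]
    have hL : (fun η : E3 => (2 : ℝ) • η)
        = fun η => ((2 : ℝ) • ContinuousLinearMap.id ℝ E3) η := by
      funext η; simp
    rw [hL]
    refine (clm_deriv_bound _ (Nat.le_add_left 1 i) ξ).trans ?_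
    have : ‖(2 : ℝ) • ContinuousLinearMap.id ℝ E3‖ ≤ 2 := by
      apply ContinuousLinearMap.opNorm_le_bound _ (by norm_num)
      intro η
      rw [ContinuousLinearMap.smul_apply, ContinuousLinearMap.id_apply, norm_smul]
      simp
    nlinarith [le_max_right ‖ξ‖ 1]

def BBs (j : ℕ) : ℝ := ∑ i ∈ Finset.range (j + 1), BB i

lemma BBs_nonneg (j : ℕ) : 0 ≤ BBs j :=
  Finset.sum_nonneg fun i _ => BB_nonneg i

lemma BB_le_BBs {i j : ℕ} (h : i ≤ j) : BB i ≤ BBs j :=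
  Finset.single_le_sum (f := fun i => BB i) (fun i _ => BB_nonneg i)
    (Finset.mem_range.2 (Nat.lt_succ_of_le h))

lemma BBs_mono {i j : ℕ} (h : i ≤ j) : BBs i ≤ BBs j := by
  unfold BBs
  apply Finset.sum_le_sum_of_subset_of_nonneg
  · exact Finset.range_subset_range.2 (by omega)
  · exact fun k _ _ => BB_nonneg k

def uu : E3 → ℝ := fun η => pp 0 (‖η‖ ^ 2)

lemma contDiff_uu : ContDiff ℝ (⊤ : ℕ∞) uu := (contDiff_pp 0).comp (contDiff_norm_sq ℝ)

lemma uu_deriv_bound (j : ℕ) {ξ : E3} (hξ : 6 ≤ ‖ξ‖) :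
    ‖iteratedFDeriv ℝ j uu ξ‖ ≤ (j.factorial : ℝ) * BBs j / ‖ξ‖ := by
  set r := ‖ξ‖ with hr
  have hr0 : (0:ℝ) < 6 := by norm_num
  have hrpos : 0 < r := lt_of_lt_of_le hr0 hξ
  set s := r ^ 2 with hsdef
  have hs1 : 1 ≤ s := by nlinarith
  have hs0 : 0 < s := lt_of_lt_of_le one_pos hs1
  have hsqrt : Real.sqrt s = r := by
    rw [hsdef, Real.sqrt_sq hrpos.le]
  -- uu = g̃ ∘ f̃
  have hcomp : uu = (fun t : ℝ => pp 0 (s * t)) ∘ (fun η : E3 => s⁻¹ * ‖η‖ ^ 2) := by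
    funext η
    simp only [Function.comp_apply, uu]
    rw [← mul_assoc, mul_inv_cancel₀ hs0.ne', one_mul]
  have hg : ContDiff ℝ (⊤ : ℕ∞) (fun t : ℝ => pp 0 (s * t)) :=
    (contDiff_pp 0).comp (contDiff_const.mul contDiff_id)
  have hf : ContDiff ℝ (⊤ : ℕ∞) (fun η : E3 => s⁻¹ * ‖η‖ ^ 2) :=
    contDiff_const.mul (contDiff_norm_sq ℝ)
  have hC : ∀ i, i ≤ j → ‖iteratedFDeriv ℝ i (fun t : ℝ => pp 0 (s * t))
      ((fun η : E3 => s⁻¹ * ‖η‖ ^ 2) ξ)‖ ≤ BBs j / r := by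
    intro i hij
    have hpt : (fun η : E3 => s⁻¹ * ‖η‖ ^ 2) ξ = 1 := by
      simp only [← hr, ← hsdef]
      exact inv_mul_cancel₀ hs0.ne'
    rw [hpt, norm_iteratedFDeriv_eq_norm_iteratedDeriv]
    have hid := iteratedDeriv_comp_const_mul ((contDiff_pp 0).of_le (by exact_mod_cast le_top) : ContDiff ℝ i (pp 0)) s
    have : iteratedDeriv i (fun t : ℝ => pp 0 (s * t)) 1 = s ^ i * pp i (s * 1) := by
      rw [show (fun t : ℝ => pp 0 (s * t)) = fun x => pp 0 (s * x) from rfl, hid,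
        iteratedDeriv_pp0]
    rw [this, mul_one, Real.norm_eq_abs, abs_mul, abs_of_nonneg (by positivity : (0:ℝ) ≤ s ^ i)]
    calc s ^ i * |pp i s| ≤ s ^ i * (BB i / (s ^ i * Real.sqrt s)) :=
          mul_le_mul_of_nonneg_left (pp_abs_le i hs1) (by positivity)
      _ = BB i / Real.sqrt s := by
          field_simp
      _ = BB i / r := by rw [hsqrt]
      _ ≤ BBs j / r := by
          gcongr
          exact BB_le_BBs hij
  have hD : ∀ i, 1 ≤ i → i ≤ j →
      ‖iteratedFDeriv ℝ i (fun η : E3 => s⁻¹ * ‖η‖ ^ 2) ξ‖ ≤ (1:ℝ) ^ i := by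
    intro i h1 hij
    have hsm : (fun η : E3 => s⁻¹ * ‖η‖ ^ 2) = s⁻¹ • qq := by
      funext η; simp [qq, smul_eq_mul]
    have hqc : ContDiff ℝ i qq := (contDiff_norm_sq ℝ (n := (i : WithTop ℕ∞)))
    rw [hsm, iteratedFDeriv_const_smul_apply hqc.contDiffAt]
    rw [norm_smul, Real.norm_eq_abs, abs_of_nonneg (by positivity : (0:ℝ) ≤ s⁻¹)]
    have hq := qq_deriv_bound h1 ξ
    have hmax : max ‖ξ‖ 1 = r := by
      rw [max_eq_left]
      linarith
    rw [hmax] at hq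
    have : s⁻¹ * ‖iteratedFDeriv ℝ i qq ξ‖ ≤ s⁻¹ * (2 * r) :=
      mul_le_mul_of_nonneg_left hq (by positivity)
    refine this.trans ?_
    rw [one_pow, hsdef]
    rw [show (r ^ 2)⁻¹ * (2 * r) = 2 / r by field_simp]
    rw [div_le_one hrpos]
    linarith
  have H := norm_iteratedFDeriv_comp_le hg hf (by exact_mod_cast le_top) ξ hC hD
  rw [← hcomp] at H
  calc ‖iteratedFDeriv ℝ j uu ξ‖ ≤ (j.factorial : ℝ) * (BBs j / r) * 1 ^ j := H
    _ = (j.factorial : ℝ) * BBs j / r := by rw [one_pow, mul_one, mul_div_assoc]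

def VV : E3 → E3 := fun η => uu η • η

lemma contDiff_VV : ContDiff ℝ (⊤ : ℕ∞) VV := contDiff_uu.smul contDiff_id

lemma VV_deriv_bound_tail (m : ℕ) {ξ : E3} (hξ : 6 ≤ ‖ξ‖) :
    ‖iteratedFDeriv ℝ m VV ξ‖ ≤ 2 ^ m * (m.factorial : ℝ) * BBs m := by
  have hrpos : (0:ℝ) < ‖ξ‖ := by linarith
  have hr1 : (1:ℝ) ≤ ‖ξ‖ := by linarith
  have H := norm_iteratedFDeriv_smul_le contDiff_uu (contDiff_id (E := E3)) ξ
      (by exact_mod_cast (le_top : (m : ℕ∞) ≤ ⊤) : (m : WithTop ℕ∞) ≤ ((⊤ : ℕ∞) : WithTop ℕ∞))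
  have hterm : ∀ i ∈ Finset.range (m + 1),
      (m.choose i : ℝ) * ‖iteratedFDeriv ℝ i uu ξ‖ * ‖iteratedFDeriv ℝ (m - i) (fun y : E3 => y) ξ‖
        ≤ (m.choose i : ℝ) * ((m.factorial : ℝ) * BBs m) := by
    intro i hi
    rw [Finset.mem_range, Nat.lt_succ_iff] at hi
    have hnum : (i.factorial : ℝ) * BBs i ≤ (m.factorial : ℝ) * BBs m :=
      mul_le_mul (by exact_mod_cast Nat.factorial_le hi) (BBs_mono hi) (BBs_nonneg i)
        (by positivity)
    have hu : ‖iteratedFDeriv ℝ i uu ξ‖ ≤ (m.factorial : ℝ) * BBs m / ‖ξ‖ :=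
      (uu_deriv_bound i hξ).trans ((div_le_div_iff_of_pos_right hrpos).2 hnum)
    have hnn : (0:ℝ) ≤ (m.factorial : ℝ) * BBs m / ‖ξ‖ :=
      div_nonneg (mul_nonneg (by positivity) (BBs_nonneg m)) hrpos.le
    rcases Nat.eq_zero_or_pos (m - i) with hmi | hmi
    · rw [hmi]
      have hz : ‖iteratedFDeriv ℝ 0 (fun y : E3 => y) ξ‖ = ‖ξ‖ := by
        simp
      rw [hz]
      calc (m.choose i : ℝ) * ‖iteratedFDeriv ℝ i uu ξ‖ * ‖ξ‖
          ≤ (m.choose i : ℝ) * ((m.factorial : ℝ) * BBs m / ‖ξ‖) * ‖ξ‖ := by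
            exact mul_le_mul_of_nonneg_right
              (mul_le_mul_of_nonneg_left hu (by positivity)) hrpos.le
        _ = (m.choose i : ℝ) * ((m.factorial : ℝ) * BBs m) := by
            field_simp
    · have hid : ‖iteratedFDeriv ℝ (m - i) (fun y : E3 => y) ξ‖ ≤ 1 := by
        have hLid : (fun y : E3 => y) = fun y => (ContinuousLinearMap.id ℝ E3) y := rfl
        rw [hLid]
        exact (clm_deriv_bound _ hmi ξ).trans ContinuousLinearMap.norm_id_le
      calc (m.choose i : ℝ) * ‖iteratedFDeriv ℝ i uu ξ‖ * ‖iteratedFDeriv ℝ (m - i) (fun y : E3 => y) ξ‖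
          ≤ (m.choose i : ℝ) * ((m.factorial : ℝ) * BBs m / ‖ξ‖) * 1 := by
            apply mul_le_mul (mul_le_mul_of_nonneg_left hu (by positivity)) hid (norm_nonneg _)
            exact mul_nonneg (by positivity) hnn
        _ = (m.choose i : ℝ) * ((m.factorial : ℝ) * BBs m / ‖ξ‖) := mul_one _
        _ ≤ (m.choose i : ℝ) * ((m.factorial : ℝ) * BBs m) := by
            apply mul_le_mul_of_nonneg_left _ (by positivity)
            rw [div_le_iff₀ hrpos]
            nlinarith [mul_nonneg (Nat.cast_nonneg (m.factorial) : (0:ℝ) ≤ m.factorial) (BBs_nonneg m)]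
  have hsum : ∑ i ∈ Finset.range (m + 1),
      (m.choose i : ℝ) * ‖iteratedFDeriv ℝ i uu ξ‖ * ‖iteratedFDeriv ℝ (m - i) (fun y : E3 => y) ξ‖
      ≤ ∑ i ∈ Finset.range (m + 1), (m.choose i : ℝ) * ((m.factorial : ℝ) * BBs m) :=
    Finset.sum_le_sum hterm
  have hbin : ∑ i ∈ Finset.range (m + 1), (m.choose i : ℝ) * ((m.factorial : ℝ) * BBs m)
      = 2 ^ m * ((m.factorial : ℝ) * BBs m) := by
    rw [← Finset.sum_mul]
    congr 1
    rw [← Nat.cast_sum, Nat.sum_range_choose]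
    push_cast
    ring
  calc ‖iteratedFDeriv ℝ m VV ξ‖ ≤ _ := H
    _ ≤ 2 ^ m * ((m.factorial : ℝ) * BBs m) := by rw [← hbin]; exact hsum
    _ = 2 ^ m * (m.factorial : ℝ) * BBs m := by ring


lemma gg_zero_zero : gg 0 0 = 1 := by
  unfold gg
  simp

lemma nu_eq (ξ : E3) : nu ξ = hh (‖ξ‖ ^ 2) := by
  unfold nu hh cst
  by_cases h : ξ = 0
  · rw [if_pos h, h]
    simp only [norm_zero, ne_eq, OfNat.ofNat_ne_zero, not_false_eq_true, zero_pow]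
    rw [gg_zero_zero]
    rw [show (-(0:ℝ) / 2) = 0 by norm_num, Real.exp_zero]
    field_simp
    norm_num
  · rw [if_neg h]
    have hr : 0 < ‖ξ‖ := norm_pos_iff.2 h
    have hgg : gg 0 (‖ξ‖ ^ 2) = ‖ξ‖⁻¹ * ∫ u in (0:ℝ)..‖ξ‖, Real.exp (-u ^ 2 / 2) := by
      have hsub : (∫ v in (0:ℝ)..1, Real.exp (-(‖ξ‖ * v) ^ 2 / 2))
          = ‖ξ‖⁻¹ • ∫ u in (‖ξ‖ * 0)..(‖ξ‖ * 1), Real.exp (-u ^ 2 / 2) :=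
        intervalIntegral.integral_comp_mul_left (fun u => Real.exp (-u ^ 2 / 2)) hr.ne'
      rw [mul_zero, mul_one] at hsub
      unfold gg
      rw [show (∫ v in (0:ℝ)..1, (-v ^ 2 / 2) ^ 0 * Real.exp (-(‖ξ‖ ^ 2 * v ^ 2) / 2))
          = ∫ v in (0:ℝ)..1, Real.exp (-(‖ξ‖ * v) ^ 2 / 2) from
        intervalIntegral.integral_congr fun v _ => by rw [pow_zero, one_mul]; congr 1; ring]
      rw [hsub]
      simp [smul_eq_mul]
    rw [hgg]
    have : (1 + ‖ξ‖ ^ 2) * (‖ξ‖⁻¹ * ∫ u in (0:ℝ)..‖ξ‖, Real.exp (-u ^ 2 / 2))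
        = (‖ξ‖ + ‖ξ‖⁻¹) * ∫ u in (0:ℝ)..‖ξ‖, Real.exp (-u ^ 2 / 2) := by
      rw [← mul_assoc]
      congr 1
      field_simp
      ring
    rw [this]

lemma contDiff_nu : ContDiff ℝ (⊤ : ℕ∞) nu := by
  have : nu = fun ξ => hh (‖ξ‖ ^ 2) := funext nu_eq
  rw [this]
  exact contDiff_hh.comp (contDiff_norm_sq ℝ)

lemma fderiv_nu_eq : fderiv ℝ nu = ⇑toDualIso ∘ VV := by
  funext ξ
  have h1 : HasFDerivAt (fun η : E3 => ‖η‖ ^ 2) ((2 : ℕ) • innerSL ℝ ξ) ξ :=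
    (hasStrictFDerivAt_norm_sq ξ).hasFDerivAt
  have h2 : HasFDerivAt nu ((pp 0 (‖ξ‖ ^ 2) / 2) • ((2 : ℕ) • innerSL ℝ ξ)) ξ := by
    have h3 := (hasDerivAt_hh (‖ξ‖ ^ 2)).comp_hasFDerivAt ξ h1
    have : nu = fun η => hh (‖η‖ ^ 2) := funext nu_eq
    rw [this]
    exact h3
  rw [h2.fderiv]
  ext y
  simp only [Function.comp_apply, toDualIso_apply, VV, uu,
    ContinuousLinearMap.smul_apply, innerSL_apply_apply, smul_eq_mul, nsmul_eq_mul,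
    Nat.cast_ofNat]
  rw [real_inner_smul_left]
  ring


lemma VV_bound (m : ℕ) : ∃ C : ℝ, ∀ ξ : E3, ‖iteratedFDeriv ℝ m VV ξ‖ ≤ C := by
  have hK : IsCompact (Metric.closedBall (0 : E3) 6) := isCompact_closedBall _ _
  have hne : (Metric.closedBall (0 : E3) 6).Nonempty := ⟨0, by simp⟩
  have hcont : ContinuousOn (fun ξ : E3 => ‖iteratedFDeriv ℝ m VV ξ‖)
      (Metric.closedBall (0 : E3) 6) :=
    ((contDiff_VV.continuous_iteratedFDeriv (by exact_mod_cast le_top)).norm).continuousOn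
  obtain ⟨ξ₀, _, hmax⟩ := hK.exists_isMaxOn hne hcont
  refine ⟨max ‖iteratedFDeriv ℝ m VV ξ₀‖ (2 ^ m * (m.factorial : ℝ) * BBs m), fun ξ => ?_⟩
  rcases le_or_gt ‖ξ‖ 6 with hle | hgt
  · exact le_max_of_le_left
      (hmax (by simpa [Metric.mem_closedBall, dist_zero_right] using hle))
  · exact le_max_of_le_right (VV_deriv_bound_tail m hgt.le)

end NuAux


end NuAuxSection

/-- `ν` is smooth and all its derivatives of order `≥ 1` are bounded. -/
theorem nu_smooth_derivatives_bounded :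
    ContDiff ℝ (⊤ : ℕ∞) nu ∧
      ∀ n : ℕ, 1 ≤ n → ∃ C : ℝ, ∀ ξ : E3, ‖iteratedFDeriv ℝ n nu ξ‖ ≤ C := by
  constructor
  · exact NuAux.contDiff_nu
  · intro n hn
    obtain ⟨m, rfl⟩ : ∃ m, n = m + 1 := ⟨n - 1, (Nat.succ_pred_eq_of_pos hn).symm⟩
    obtain ⟨C, hC⟩ := NuAux.VV_bound m
    refine ⟨C, fun ξ => ?_⟩
    have h1 : ‖iteratedFDeriv ℝ (m + 1) nu ξ‖ = ‖iteratedFDeriv ℝ m (fderiv ℝ nu) ξ‖ :=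
      (norm_iteratedFDeriv_fderiv).symm
    rw [h1, NuAux.fderiv_nu_eq,
      NuAux.toDualIso.norm_iteratedFDeriv_comp_left NuAux.contDiff_VV.contDiffAt (by exact_mod_cast le_top)]
    exact hC ξ

end
end

section
/- For every β ≥ 0 there exists a constant C > 0 such that for every measurable h : ℝ³ → ℝ with ‖h‖_{L^∞_{ξ,β}} < ∞, one has ‖Kh‖_{L^∞_{ξ,β}} ≤ C ‖h‖_{L^∞_{ξ,β}}. -/
open MeasureTheory
open scoped ENNReal NNReal Classical

noncomputable section

namespace KHelpers

/-- Radial majorant of the kernel. -/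
def Phi3 (r : ℝ) : ℝ :=
  (2 / Real.sqrt (2 * Real.pi) * r⁻¹ + r / 2) * Real.exp (-r ^ 2 / 16)

lemma phi3_nonneg {r : ℝ} (hr : 0 ≤ r) : 0 ≤ Phi3 r := by
  have h1 : 0 ≤ r⁻¹ := inv_nonneg.mpr hr
  have h2 : (0:ℝ) ≤ 2 / Real.sqrt (2 * Real.pi) := by positivity
  have h3 : (0:ℝ) ≤ 2 / Real.sqrt (2 * Real.pi) * r⁻¹ + r / 2 := by
    have := mul_nonneg h2 h1
    linarith
  exact mul_nonneg h3 (Real.exp_pos _).le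

set_option maxHeartbeats 1000000 in
lemma real_bound {β a b r : ℝ} (hβ : 0 ≤ β) (ha : 0 ≤ a) (hb : 0 ≤ b) (hr : 0 < r)
    (h1 : |a - b| ≤ r) (h2 : r ≤ a + b) :
    (1 + a) ^ β * |2 / (Real.sqrt (2 * Real.pi) * r) *
        Real.exp (-(a ^ 2 - b ^ 2) ^ 2 / (8 * r ^ 2) - r ^ 2 / 8) -
        r / 2 * Real.exp (-(a ^ 2 + b ^ 2) / 4)| ≤
      (2 ^ β + Real.exp (8 * β ^ 2 / 3)) * ((1 + b) ^ β * Phi3 r) := by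
  have hS : (0:ℝ) < Real.exp (8 * β ^ 2 / 3) := Real.exp_pos _
  set S := Real.exp (8 * β ^ 2 / 3) with hSdef
  have h2β : (0:ℝ) < 2 ^ β := Real.rpow_pos_of_pos two_pos β
  have hPa : (0:ℝ) < (1 + a) ^ β := Real.rpow_pos_of_pos (by linarith) β
  have hPb : (0:ℝ) < (1 + b) ^ β := Real.rpow_pos_of_pos (by linarith) β
  have hPb1 : (1:ℝ) ≤ (1 + b) ^ β := by
    calc (1:ℝ) = 1 ^ β := (Real.one_rpow β).symm
    _ ≤ (1 + b) ^ β := Real.rpow_le_rpow zero_le_one (by linarith) hβ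
  have hsq : (0:ℝ) < Real.sqrt (2 * Real.pi) := Real.sqrt_pos.mpr (by positivity)
  have hrinv : (0:ℝ) ≤ r⁻¹ := inv_nonneg.mpr hr.le
  set A := a ^ 2 - b ^ 2 with hAdef
  -- first exponential estimate
  have exp1 : Real.exp (-A ^ 2 / (8 * r ^ 2) - r ^ 2 / 8) ≤
      Real.exp (-r ^ 2 / 16) * Real.exp (-|A| / 8) := by
    rw [← Real.exp_add]
    apply Real.exp_le_exp.mpr
    have e : A ^ 2 / (8 * r ^ 2) * (8 * r ^ 2) = A ^ 2 :=
      div_mul_cancel₀ _ (by positivity)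
    have hX : 0 ≤ A ^ 2 / (8 * r ^ 2) := by positivity
    have hng : -A ^ 2 / (8 * r ^ 2) = -(A ^ 2 / (8 * r ^ 2)) := by ring
    rw [hng]
    nlinarith [e, pow_pos hr 2, sq_nonneg (|A| - r ^ 2), sq_abs A, abs_nonneg A]
  -- second exponential estimate
  have exp2 : Real.exp (-(a ^ 2 + b ^ 2) / 4) ≤
      Real.exp (-r ^ 2 / 16) * Real.exp (-a ^ 2 / 8) := by
    rw [← Real.exp_add]
    apply Real.exp_le_exp.mpr
    have h3 : r ^ 2 ≤ (a + b) ^ 2 := by nlinarith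
    nlinarith [sq_nonneg (a - b)]
  -- weight transfer, common sub-bound
  have hsub : ∀ t : ℝ, 0 ≤ t → (1 + t) ^ β * Real.exp (-(3 * t ^ 2) / 32) ≤ S := by
    intro t ht
    have hPa_le : (1 + t) ^ β ≤ Real.exp (t * β) := by
      rw [Real.exp_mul]
      exact Real.rpow_le_rpow (by linarith) (by linarith [Real.add_one_le_exp t]) hβ
    calc (1 + t) ^ β * Real.exp (-(3 * t ^ 2) / 32)
        ≤ Real.exp (t * β) * Real.exp (-(3 * t ^ 2) / 32) :=
          mul_le_mul_of_nonneg_right hPa_le (Real.exp_pos _).le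
      _ = Real.exp (t * β + -(3 * t ^ 2) / 32) := (Real.exp_add _ _).symm
      _ ≤ S := by
          rw [hSdef]
          apply Real.exp_le_exp.mpr
          nlinarith [sq_nonneg (3 * t - 16 * β)]
  -- weight bound 1
  have W1 : (1 + a) ^ β * Real.exp (-|A| / 8) ≤ (2 ^ β + S) * (1 + b) ^ β := by
    rcases le_or_gt a (2 * b) with hc | hc
    · have hA1 : (1 + a) ^ β ≤ 2 ^ β * (1 + b) ^ β := by
        rw [← Real.mul_rpow (by norm_num) (by linarith)]
        exact Real.rpow_le_rpow (by linarith) (by linarith) hβ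
      have hA2 : Real.exp (-|A| / 8) ≤ 1 := by
        rw [← Real.exp_zero]
        apply Real.exp_le_exp.mpr
        have := abs_nonneg A
        linarith
      calc (1 + a) ^ β * Real.exp (-|A| / 8) ≤ (1 + a) ^ β * 1 :=
            mul_le_mul_of_nonneg_left hA2 hPa.le
        _ = (1 + a) ^ β := mul_one _
        _ ≤ 2 ^ β * (1 + b) ^ β := hA1
        _ ≤ (2 ^ β + S) * (1 + b) ^ β := by linarith [(mul_pos hS hPb).le]
    · have hA3 : 3 * a ^ 2 / 4 ≤ |A| := by
        have h4 : (0:ℝ) ≤ a ^ 2 - b ^ 2 := by nlinarith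
        rw [hAdef, abs_of_nonneg h4]
        nlinarith
    
      have hexp : Real.exp (-|A| / 8) ≤ Real.exp (-(3 * a ^ 2) / 32) := by
        apply Real.exp_le_exp.mpr
        linarith
      calc (1 + a) ^ β * Real.exp (-|A| / 8)
          ≤ (1 + a) ^ β * Real.exp (-(3 * a ^ 2) / 32) :=
            mul_le_mul_of_nonneg_left hexp hPa.le
        _ ≤ S := hsub a ha
        _ ≤ S * (1 + b) ^ β := le_mul_of_one_le_right hS.le hPb1
        _ ≤ (2 ^ β + S) * (1 + b) ^ β := by linarith [(mul_pos h2β hPb).le]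
  -- weight bound 2
  have W2 : (1 + a) ^ β * Real.exp (-a ^ 2 / 8) ≤ (2 ^ β + S) * (1 + b) ^ β := by
    have hexp : Real.exp (-a ^ 2 / 8) ≤ Real.exp (-(3 * a ^ 2) / 32) := by
      apply Real.exp_le_exp.mpr
      linarith [sq_nonneg a]
    calc (1 + a) ^ β * Real.exp (-a ^ 2 / 8)
        ≤ (1 + a) ^ β * Real.exp (-(3 * a ^ 2) / 32) :=
          mul_le_mul_of_nonneg_left hexp hPa.le
      _ ≤ S := hsub a ha
      _ ≤ S * (1 + b) ^ β := le_mul_of_one_le_right hS.le hPb1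
      _ ≤ (2 ^ β + S) * (1 + b) ^ β := by linarith [(mul_pos h2β hPb).le]
  -- term bounds
  have hT1 : (0:ℝ) ≤ 2 / (Real.sqrt (2 * Real.pi) * r) *
      Real.exp (-A ^ 2 / (8 * r ^ 2) - r ^ 2 / 8) := by positivity
  have hT2 : (0:ℝ) ≤ r / 2 * Real.exp (-(a ^ 2 + b ^ 2) / 4) := by positivity
  have habs : |2 / (Real.sqrt (2 * Real.pi) * r) *
      Real.exp (-A ^ 2 / (8 * r ^ 2) - r ^ 2 / 8) -
      r / 2 * Real.exp (-(a ^ 2 + b ^ 2) / 4)| ≤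
      2 / (Real.sqrt (2 * Real.pi) * r) * Real.exp (-A ^ 2 / (8 * r ^ 2) - r ^ 2 / 8) +
      r / 2 * Real.exp (-(a ^ 2 + b ^ 2) / 4) := by
    rw [abs_sub_le_iff]
    constructor <;> linarith
  have e1 : 2 / (Real.sqrt (2 * Real.pi) * r) = 2 / Real.sqrt (2 * Real.pi) * r⁻¹ := by
    field_simp
  have hc1r : (0:ℝ) ≤ 2 / Real.sqrt (2 * Real.pi) * r⁻¹ := by
    apply mul_nonneg (by positivity) hrinv
  have B1 : (1 + a) ^ β * (2 / (Real.sqrt (2 * Real.pi) * r) *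
      Real.exp (-A ^ 2 / (8 * r ^ 2) - r ^ 2 / 8)) ≤
      (2 ^ β + S) * (1 + b) ^ β *
        (2 / Real.sqrt (2 * Real.pi) * r⁻¹ * Real.exp (-r ^ 2 / 16)) := by
    calc (1 + a) ^ β * (2 / (Real.sqrt (2 * Real.pi) * r) *
        Real.exp (-A ^ 2 / (8 * r ^ 2) - r ^ 2 / 8))
        = 2 / Real.sqrt (2 * Real.pi) * r⁻¹ *
          ((1 + a) ^ β * Real.exp (-A ^ 2 / (8 * r ^ 2) - r ^ 2 / 8)) := by
          rw [e1]; ring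
      _ ≤ 2 / Real.sqrt (2 * Real.pi) * r⁻¹ *
          ((1 + a) ^ β * (Real.exp (-r ^ 2 / 16) * Real.exp (-|A| / 8))) := by
          apply mul_le_mul_of_nonneg_left _ hc1r
          exact mul_le_mul_of_nonneg_left exp1 hPa.le
      _ = 2 / Real.sqrt (2 * Real.pi) * r⁻¹ * Real.exp (-r ^ 2 / 16) *
          ((1 + a) ^ β * Real.exp (-|A| / 8)) := by ring
      _ ≤ 2 / Real.sqrt (2 * Real.pi) * r⁻¹ * Real.exp (-r ^ 2 / 16) *
          ((2 ^ β + S) * (1 + b) ^ β) := by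
          apply mul_le_mul_of_nonneg_left W1
          exact mul_nonneg hc1r (Real.exp_pos _).le
      _ = (2 ^ β + S) * (1 + b) ^ β *
          (2 / Real.sqrt (2 * Real.pi) * r⁻¹ * Real.exp (-r ^ 2 / 16)) := by ring
  have B2 : (1 + a) ^ β * (r / 2 * Real.exp (-(a ^ 2 + b ^ 2) / 4)) ≤
      (2 ^ β + S) * (1 + b) ^ β * (r / 2 * Real.exp (-r ^ 2 / 16)) := by
    calc (1 + a) ^ β * (r / 2 * Real.exp (-(a ^ 2 + b ^ 2) / 4))
        ≤ (1 + a) ^ β * (r / 2 * (Real.exp (-r ^ 2 / 16) * Real.exp (-a ^ 2 / 8))) := by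
          apply mul_le_mul_of_nonneg_left _ hPa.le
          apply mul_le_mul_of_nonneg_left exp2 (by positivity)
      _ = r / 2 * Real.exp (-r ^ 2 / 16) * ((1 + a) ^ β * Real.exp (-a ^ 2 / 8)) := by ring
      _ ≤ r / 2 * Real.exp (-r ^ 2 / 16) * ((2 ^ β + S) * (1 + b) ^ β) := by
          apply mul_le_mul_of_nonneg_left W2 (by positivity)
      _ = (2 ^ β + S) * (1 + b) ^ β * (r / 2 * Real.exp (-r ^ 2 / 16)) := by ring
  calc (1 + a) ^ β * |2 / (Real.sqrt (2 * Real.pi) * r) *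
      Real.exp (-A ^ 2 / (8 * r ^ 2) - r ^ 2 / 8) -
      r / 2 * Real.exp (-(a ^ 2 + b ^ 2) / 4)|
      ≤ (1 + a) ^ β * (2 / (Real.sqrt (2 * Real.pi) * r) *
        Real.exp (-A ^ 2 / (8 * r ^ 2) - r ^ 2 / 8) +
        r / 2 * Real.exp (-(a ^ 2 + b ^ 2) / 4)) :=
        mul_le_mul_of_nonneg_left habs hPa.le
    _ = (1 + a) ^ β * (2 / (Real.sqrt (2 * Real.pi) * r) *
        Real.exp (-A ^ 2 / (8 * r ^ 2) - r ^ 2 / 8)) +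
        (1 + a) ^ β * (r / 2 * Real.exp (-(a ^ 2 + b ^ 2) / 4)) := by ring
    _ ≤ (2 ^ β + S) * (1 + b) ^ β *
          (2 / Real.sqrt (2 * Real.pi) * r⁻¹ * Real.exp (-r ^ 2 / 16)) +
        (2 ^ β + S) * (1 + b) ^ β * (r / 2 * Real.exp (-r ^ 2 / 16)) := add_le_add B1 B2
    _ = (2 ^ β + S) * ((1 + b) ^ β * Phi3 r) := by
        simp only [Phi3]; ring

lemma wker_bound {β : ℝ} (hβ : 0 ≤ β) (ξ ξs : E3) :
    (1 + ‖ξ‖) ^ β * |Wker ξ ξs| ≤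
      (2 ^ β + Real.exp (8 * β ^ 2 / 3)) * ((1 + ‖ξs‖) ^ β * Phi3 ‖ξ - ξs‖) := by
  rcases eq_or_lt_of_le (norm_nonneg (ξ - ξs)) with hr | hr
  · have h0 : ‖ξ - ξs‖ = 0 := hr.symm
    simp only [Wker, Phi3, h0]
    norm_num
  · simp only [Wker]
    exact real_bound hβ (norm_nonneg ξ) (norm_nonneg ξs) hr
      (abs_norm_sub_norm_le ξ ξs) (norm_sub_le ξ ξs)

lemma coord_le (x : E3) (i : Fin 3) : |x i| ≤ ‖x‖ := by
  rw [EuclideanSpace.norm_eq, ← Real.sqrt_sq_eq_abs]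
  apply Real.sqrt_le_sqrt
  have := Finset.single_le_sum (f := fun j => ‖x j‖ ^ 2)
    (fun j _ => by positivity) (Finset.mem_univ i)
  simpa [Real.norm_eq_abs, sq_abs] using this

lemma g1d_integrable :
    Integrable (fun t : ℝ => |t| ^ (-(1/3) : ℝ) * Real.exp (-(1/16) * t ^ 2)) := by
  have h0 : IntegrableOn (fun t : ℝ => t ^ (-(1/3) : ℝ) * Real.exp (-(1/16) * t ^ 2))
      (Set.Ioi 0) := integrableOn_rpow_mul_exp_neg_mul_sq (by norm_num) (by norm_num)
  have hIoi : IntegrableOn (fun t : ℝ => |t| ^ (-(1/3) : ℝ) * Real.exp (-(1/16) * t ^ 2))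
      (Set.Ioi 0) := by
    apply h0.congr_fun _ measurableSet_Ioi
    intro x hx
    dsimp only
    rw [abs_of_pos hx]
  have hIio : IntegrableOn (fun t : ℝ => |t| ^ (-(1/3) : ℝ) * Real.exp (-(1/16) * t ^ 2))
      (Set.Iio 0) := by
    have hpre : Set.Iio (0:ℝ) = Neg.neg ⁻¹' Set.Ioi (0:ℝ) := by
      ext x; simp
    have heven : (fun t : ℝ => |t| ^ (-(1/3) : ℝ) * Real.exp (-(1/16) * t ^ 2)) =
        (fun t : ℝ => |t| ^ (-(1/3) : ℝ) * Real.exp (-(1/16) * t ^ 2)) ∘ Neg.neg := by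
      funext x
      simp [Function.comp, abs_neg, neg_sq]
    rw [hpre, heven]
    exact ((Measure.measurePreserving_neg (volume : Measure ℝ)).integrableOn_comp_preimage
      (Homeomorph.neg ℝ).measurableEmbedding).mpr hIoi
  rw [← integrableOn_univ, ← Set.Iio_union_Ici (a := (0:ℝ)), integrableOn_union]
  exact ⟨hIio, Iff.mpr integrableOn_Ici_iff_integrableOn_Ioi hIoi⟩

set_option maxHeartbeats 1000000 in
lemma sing_integrable : Integrable (fun v : E3 => ‖v‖⁻¹ * Real.exp (-‖v‖ ^ 2 / 16)) := by
  have hmp := EuclideanSpace.volume_preserving_symm_measurableEquiv_toLp (Fin 3)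
  have hprod_pi : Integrable (fun x : Fin 3 → ℝ =>
      ∏ i, |x i| ^ (-(1/3) : ℝ) * Real.exp (-(1/16) * (x i) ^ 2)) :=
    Integrable.fintype_prod
      (f := fun _ t => |t| ^ (-(1/3) : ℝ) * Real.exp (-(1/16) * t ^ 2))
      (fun _ => g1d_integrable)
  have hprod : Integrable (fun v : E3 =>
      ∏ i, |v i| ^ (-(1/3) : ℝ) * Real.exp (-(1/16) * (v i) ^ 2)) := by
    rw [← (MeasurePreserving.symm (MeasurableEquiv.toLp 2 (Fin 3 → ℝ)).symm hmp).integrable_comp_emb (MeasurableEquiv.measurableEmbedding _)]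
    exact hprod_pi
  have hnull : ∀ i : Fin 3, (volume : Measure E3) {v : E3 | v i = 0} = 0 := by
    intro i
    have hset : {v : E3 | v i = 0} =
        (MeasurableEquiv.toLp 2 (Fin 3 → ℝ)).symm ⁻¹' {x : Fin 3 → ℝ | x i = 0} := rfl
    have hms : MeasurableSet {x : Fin 3 → ℝ | x i = 0} :=
      (measurable_pi_apply i) (measurableSet_singleton 0)
    rw [hset, hmp.measure_preimage hms.nullMeasurableSet]
    rw [MeasureTheory.volume_pi]
    exact Measure.pi_hyperplane (fun _ => volume) i 0
  have hae : ∀ᵐ v : E3, ∀ i : Fin 3, v i ≠ 0 := by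
    rw [MeasureTheory.ae_all_iff]
    intro i
    exact (MeasureTheory.measure_eq_zero_iff_ae_notMem.mp (hnull i))
  apply hprod.mono'
  · apply Measurable.aestronglyMeasurable
    exact (measurable_norm.inv).mul (((measurable_norm.pow_const 2).neg.div_const 16).exp)
  · filter_upwards [hae] with v hv
    rw [Real.norm_of_nonneg (by positivity)]
    have hvnorm : ∀ i, |v i| ≤ ‖v‖ := coord_le v
    have hvpos : ∀ i : Fin 3, 0 < |v i| := fun i => abs_pos.mpr (hv i)
    have hnpos : 0 < ‖v‖ := lt_of_lt_of_le (hvpos 0) (hvnorm 0)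
    have hsum : ‖v‖ ^ 2 = ∑ i, (v i) ^ 2 := by
      rw [EuclideanSpace.norm_eq, Real.sq_sqrt (by positivity)]
      simp [Real.norm_eq_abs, sq_abs]
    have hprod_le : ∏ i : Fin 3, |v i| ^ ((1:ℝ)/3) ≤ ‖v‖ := by
      calc ∏ i : Fin 3, |v i| ^ ((1:ℝ)/3) ≤ ∏ _i : Fin 3, ‖v‖ ^ ((1:ℝ)/3) :=
          Finset.prod_le_prod (fun i _ => Real.rpow_nonneg (abs_nonneg _) _)
            (fun i _ => Real.rpow_le_rpow (abs_nonneg _) (hvnorm i) (by norm_num))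
        _ = (‖v‖ ^ ((1:ℝ)/3)) ^ (3:ℕ) := by
            rw [Finset.prod_const]
            norm_num
        _ = ‖v‖ := by
            rw [← Real.rpow_natCast (‖v‖ ^ ((1:ℝ)/3)) 3, ← Real.rpow_mul (norm_nonneg v)]
            norm_num
    have hPpos : 0 < ∏ i : Fin 3, |v i| ^ ((1:ℝ)/3) :=
      Finset.prod_pos (fun i _ => Real.rpow_pos_of_pos (hvpos i) _)
    have hinv : ‖v‖⁻¹ ≤ ∏ i : Fin 3, |v i| ^ (-(1/3) : ℝ) := by
      have hi1 : ‖v‖⁻¹ ≤ (∏ i : Fin 3, |v i| ^ ((1:ℝ)/3))⁻¹ :=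
        inv_anti₀ hPpos hprod_le
      calc ‖v‖⁻¹ ≤ (∏ i : Fin 3, |v i| ^ ((1:ℝ)/3))⁻¹ := hi1
        _ = ∏ i : Fin 3, (|v i| ^ ((1:ℝ)/3))⁻¹ := (Finset.prod_inv_distrib _).symm
        _ = ∏ i : Fin 3, |v i| ^ (-(1/3) : ℝ) := by
            apply Finset.prod_congr rfl
            intro i _
            rw [← Real.rpow_neg (abs_nonneg _)]
    have hexp : Real.exp (-‖v‖ ^ 2 / 16) = ∏ i : Fin 3, Real.exp (-(1/16) * (v i) ^ 2) := by
      rw [← Real.exp_sum]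
      congr 1
      rw [hsum, neg_div, Finset.sum_div, ← Finset.sum_neg_distrib]
      exact Finset.sum_congr rfl (fun i _ => by ring)
    calc ‖v‖⁻¹ * Real.exp (-‖v‖ ^ 2 / 16)
        ≤ (∏ i : Fin 3, |v i| ^ (-(1/3) : ℝ)) * ∏ i : Fin 3, Real.exp (-(1/16) * (v i) ^ 2) := by
          rw [hexp]
          exact mul_le_mul_of_nonneg_right hinv
            (Finset.prod_nonneg fun i _ => (Real.exp_pos _).le)
      _ = ∏ i : Fin 3, |v i| ^ (-(1/3) : ℝ) * Real.exp (-(1/16) * (v i) ^ 2) :=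
          (Finset.prod_mul_distrib).symm

lemma gauss_integrable : Integrable (fun v : E3 => Real.exp (-(1/32) * ‖v‖ ^ 2)) := by
  have h := (GaussianFourier.integrable_cexp_neg_mul_sq_norm_add_of_euclideanSpace
    (b := (1/32 : ℂ)) (by norm_num) 0 (0 : E3)).norm
  apply h.congr
  filter_upwards with v
  have hz : (-(1/32 : ℂ) * (‖v‖ : ℂ) ^ 2 + 0 * ((inner ℝ (0 : E3) v : ℝ) : ℂ))
      = ((-(1/32) * ‖v‖ ^ 2 : ℝ) : ℂ) := by
    push_cast
    ring
  rw [hz, Complex.norm_exp, Complex.ofReal_re]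

lemma phi3_integrable : Integrable (fun v : E3 => Phi3 ‖v‖) := by
  have heq : (fun v : E3 => Phi3 ‖v‖) = fun v : E3 =>
      2 / Real.sqrt (2 * Real.pi) * (‖v‖⁻¹ * Real.exp (-‖v‖ ^ 2 / 16)) +
      ‖v‖ / 2 * Real.exp (-‖v‖ ^ 2 / 16) := by
    funext v
    simp only [Phi3]
    ring
  rw [heq]
  apply Integrable.add
  · exact sing_integrable.const_mul _
  · apply Integrable.mono' (gauss_integrable.const_mul (Real.exp 8))
    · apply Continuous.aestronglyMeasurable
      exact (continuous_norm.div_const 2).mul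
        (Real.continuous_exp.comp ((continuous_norm.pow 2).neg.div_const 16))
    · filter_upwards with v
      have ht : (0:ℝ) ≤ ‖v‖ := norm_nonneg v
      rw [Real.norm_of_nonneg (by positivity)]
      have h1 : ‖v‖ ≤ Real.exp (‖v‖ ^ 2 / 32 + 8) := by
        calc ‖v‖ ≤ ‖v‖ ^ 2 / 32 + 8 + 1 := by nlinarith [sq_nonneg (‖v‖ - 16)]
          _ ≤ Real.exp (‖v‖ ^ 2 / 32 + 8) := Real.add_one_le_exp _
      calc ‖v‖ / 2 * Real.exp (-‖v‖ ^ 2 / 16)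
          ≤ Real.exp (‖v‖ ^ 2 / 32 + 8) * Real.exp (-‖v‖ ^ 2 / 16) := by
            apply mul_le_mul_of_nonneg_right _ (Real.exp_pos _).le
            linarith
        _ = Real.exp 8 * Real.exp (-(1/32) * ‖v‖ ^ 2) := by
            rw [← Real.exp_add, ← Real.exp_add]
            congr 1
            ring

end KHelpers

set_option maxHeartbeats 1000000 in
/-- `K` is bounded on the weighted space `L^∞_{ξ,β}` for every `β ≥ 0`. -/
theorem K_weighted_Linf_bounded :
    ∀ β : ℝ, 0 ≤ β → ∃ C > (0:ℝ), ∀ h : E3 → ℝ, Measurable h →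
      wnormInf β h < ⊤ → wnormInf β (Kop h) ≤ ENNReal.ofReal C * wnormInf β h := by
  intro β hβ
  have hCβpos : (0:ℝ) < 2 ^ β + Real.exp (8 * β ^ 2 / 3) := by positivity
  set Cβ := 2 ^ β + Real.exp (8 * β ^ 2 / 3) with hCβ
  set J := ∫⁻ v : E3, ENNReal.ofReal (KHelpers.Phi3 ‖v‖) with hJ
  have hJlt : J < ⊤ := KHelpers.phi3_integrable.lintegral_lt_top
  have hJtR : (0:ℝ) ≤ J.toReal := ENNReal.toReal_nonneg
  refine ⟨Cβ * J.toReal + 1, by positivity, ?_⟩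
  intro h _hmeas hfin
  set M := wnormInf β h with hM
  have mphi : Measurable fun v : E3 => ENNReal.ofReal (KHelpers.Phi3 ‖v‖) := by
    apply ENNReal.measurable_ofReal.comp
    simp only [KHelpers.Phi3]
    exact ((measurable_const.mul measurable_norm.inv).add (measurable_norm.div_const 2)).mul
      (((measurable_norm.pow_const 2).neg.div_const 16).exp)
  have key : ∀ ξ : E3, ENNReal.ofReal ((1 + ‖ξ‖) ^ β) * (‖Kop h ξ‖₊ : ℝ≥0∞) ≤
      ENNReal.ofReal (Cβ * J.toReal + 1) * M := by
    intro ξ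
    have hPa : (0:ℝ) ≤ (1 + ‖ξ‖) ^ β := Real.rpow_nonneg (by positivity) β
    have hsubst : ∫⁻ ξs, ENNReal.ofReal (KHelpers.Phi3 ‖ξ - ξs‖) = J := by
      rw [hJ]
      exact (Measure.measurePreserving_sub_left volume ξ).lintegral_comp mphi
    have hptwise : ∀ ξs : E3,
        ENNReal.ofReal ((1 + ‖ξ‖) ^ β) * (‖Wker ξ ξs * h ξs‖₊ : ℝ≥0∞) ≤
        ENNReal.ofReal Cβ * M * ENNReal.ofReal (KHelpers.Phi3 ‖ξ - ξs‖) := by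
      intro ξs
      have hPb : (0:ℝ) ≤ (1 + ‖ξs‖) ^ β := Real.rpow_nonneg (by positivity) β
      have hphinn : (0:ℝ) ≤ KHelpers.Phi3 ‖ξ - ξs‖ :=
        KHelpers.phi3_nonneg (norm_nonneg _)
      have hnorm : ‖Wker ξ ξs * h ξs‖ = |Wker ξ ξs| * ‖h ξs‖ := by
        rw [norm_mul, Real.norm_eq_abs]
      have hptw : (1 + ‖ξ‖) ^ β * ‖Wker ξ ξs * h ξs‖ ≤
          Cβ * KHelpers.Phi3 ‖ξ - ξs‖ * ((1 + ‖ξs‖) ^ β * ‖h ξs‖) := by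
        rw [hnorm]
        have hwb := KHelpers.wker_bound hβ ξ ξs
        have hh : (0:ℝ) ≤ ‖h ξs‖ := norm_nonneg _
        calc (1 + ‖ξ‖) ^ β * (|Wker ξ ξs| * ‖h ξs‖)
            = (1 + ‖ξ‖) ^ β * |Wker ξ ξs| * ‖h ξs‖ := by ring
          _ ≤ Cβ * ((1 + ‖ξs‖) ^ β * KHelpers.Phi3 ‖ξ - ξs‖) * ‖h ξs‖ :=
              mul_le_mul_of_nonneg_right hwb hh
          _ = Cβ * KHelpers.Phi3 ‖ξ - ξs‖ * ((1 + ‖ξs‖) ^ β * ‖h ξs‖) := by ring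
      have hle : ENNReal.ofReal ((1 + ‖ξs‖) ^ β) * (‖h ξs‖₊ : ℝ≥0∞) ≤ M :=
        le_iSup (fun ξ' : E3 => ENNReal.ofReal ((1 + ‖ξ'‖) ^ β) * (‖h ξ'‖₊ : ℝ≥0∞)) ξs
      calc ENNReal.ofReal ((1 + ‖ξ‖) ^ β) * (‖Wker ξ ξs * h ξs‖₊ : ℝ≥0∞)
          = ENNReal.ofReal ((1 + ‖ξ‖) ^ β * ‖Wker ξ ξs * h ξs‖) := by
            rw [← (show ∀ x : ℝ, ENNReal.ofReal ‖x‖ = (‖x‖₊ : ℝ≥0∞) from fun x => ofReal_norm x), ← ENNReal.ofReal_mul hPa]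
        _ ≤ ENNReal.ofReal (Cβ * KHelpers.Phi3 ‖ξ - ξs‖ * ((1 + ‖ξs‖) ^ β * ‖h ξs‖)) :=
            ENNReal.ofReal_le_ofReal hptw
        _ = ENNReal.ofReal (Cβ * KHelpers.Phi3 ‖ξ - ξs‖) *
            (ENNReal.ofReal ((1 + ‖ξs‖) ^ β) * (‖h ξs‖₊ : ℝ≥0∞)) := by
            rw [ENNReal.ofReal_mul (mul_nonneg hCβpos.le hphinn),
              ENNReal.ofReal_mul hPb, (show ∀ x : ℝ, ENNReal.ofReal ‖x‖ = (‖x‖₊ : ℝ≥0∞) from fun x => ofReal_norm x)]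
        _ ≤ ENNReal.ofReal (Cβ * KHelpers.Phi3 ‖ξ - ξs‖) * M := mul_le_mul_right hle _
        _ = ENNReal.ofReal Cβ * M * ENNReal.ofReal (KHelpers.Phi3 ‖ξ - ξs‖) := by
            rw [ENNReal.ofReal_mul hCβpos.le]
            ring
    calc ENNReal.ofReal ((1 + ‖ξ‖) ^ β) * (‖Kop h ξ‖₊ : ℝ≥0∞)
        ≤ ENNReal.ofReal ((1 + ‖ξ‖) ^ β) * ∫⁻ ξs, (‖Wker ξ ξs * h ξs‖₊ : ℝ≥0∞) :=
          mul_le_mul_right (enorm_integral_le_lintegral_enorm _) _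
      _ = ∫⁻ ξs, ENNReal.ofReal ((1 + ‖ξ‖) ^ β) * (‖Wker ξ ξs * h ξs‖₊ : ℝ≥0∞) :=
          (lintegral_const_mul' _ _ ENNReal.ofReal_ne_top).symm
      _ ≤ ∫⁻ ξs, ENNReal.ofReal Cβ * M * ENNReal.ofReal (KHelpers.Phi3 ‖ξ - ξs‖) :=
          lintegral_mono (fun ξs => hptwise ξs)
      _ = ENNReal.ofReal Cβ * M * ∫⁻ ξs, ENNReal.ofReal (KHelpers.Phi3 ‖ξ - ξs‖) :=
          lintegral_const_mul' _ _ (ENNReal.mul_ne_top ENNReal.ofReal_ne_top hfin.ne)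
      _ = ENNReal.ofReal Cβ * M * J := by rw [hsubst]
      _ = ENNReal.ofReal Cβ * J * M := by ring
      _ = ENNReal.ofReal (Cβ * J.toReal) * M := by
          rw [ENNReal.ofReal_mul hCβpos.le, ENNReal.ofReal_toReal hJlt.ne]
      _ ≤ ENNReal.ofReal (Cβ * J.toReal + 1) * M :=
          mul_le_mul_left (ENNReal.ofReal_le_ofReal (by linarith)) M
  exact iSup_le key


end
end

section
/- For every δ > 0 there exists a constant C > 0 such that for all ε > 0 and all t ≥ 0: ε³ Σ_{k∈ℤ³, 0<ε|k|<δ} exp(−ε²|k|² t) ≤ C (1+t)^{−3/2}. -/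
open MeasureTheory
open scoped ENNReal NNReal Classical

noncomputable section

lemma gauss_sum_le (b : ℝ) (hb : 0 < b) (N : ℕ) :
    ∑ j ∈ Finset.range N, Real.exp (-b * ((j:ℝ)+1) ^ 2) ≤ Real.sqrt (Real.pi / b) / 2 := by
  have hint : MeasureTheory.Integrable (fun x : ℝ => Real.exp (-b * x ^ 2)) := integrable_exp_neg_mul_sq hb
  have h1 : ∀ j : ℕ, Real.exp (-b * ((j:ℝ)+1) ^ 2)
      ≤ ∫ x in (j:ℝ)..((j:ℝ)+1), Real.exp (-b * x ^ 2) := by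
    intro j
    have hc : Real.exp (-b * ((j:ℝ)+1) ^ 2)
        = ∫ _x in (j:ℝ)..((j:ℝ)+1), Real.exp (-b * ((j:ℝ)+1) ^ 2) := by
      rw [intervalIntegral.integral_const]; simp
    rw [hc]
    apply intervalIntegral.integral_mono_on (by linarith)
      (intervalIntegrable_const) (hint.intervalIntegrable)
    intro x hx
    apply Real.exp_le_exp.2
    have hx0 : (0:ℝ) ≤ x := le_trans (Nat.cast_nonneg j) hx.1
    nlinarith [hx.2, sq_nonneg x, mul_le_mul_of_nonneg_left (sq_le_sq' (by linarith) hx.2) hb.le]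
  calc ∑ j ∈ Finset.range N, Real.exp (-b * ((j:ℝ)+1) ^ 2)
      ≤ ∑ j ∈ Finset.range N, ∫ x in (j:ℝ)..((j:ℝ)+1), Real.exp (-b * x ^ 2) :=
        Finset.sum_le_sum fun j _ => h1 j
    _ = ∫ x in (0:ℝ)..(N:ℝ), Real.exp (-b * x ^ 2) := by
        have := intervalIntegral.sum_integral_adjacent_intervals (a := fun n : ℕ => (n:ℝ))
          (n := N) (f := fun x => Real.exp (-b * x ^ 2))
          (fun k _ => hint.intervalIntegrable)
        push_cast at this
        rw [← this]
    _ ≤ ∫ x in Set.Ioi (0:ℝ), Real.exp (-b * x ^ 2) := by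
        rw [intervalIntegral.integral_of_le (by positivity)]
        apply MeasureTheory.setIntegral_mono_set hint.integrableOn
          (Filter.Eventually.of_forall fun x => (Real.exp_pos _).le)
        exact MeasureTheory.ae_of_all _ fun x hx => hx.1
    _ = Real.sqrt (Real.pi / b) / 2 := integral_gaussian_Ioi b

lemma sum_Icc_int (g : ℤ → ℝ) : ∀ N : ℕ, ∑ n ∈ Finset.Icc (-(N:ℤ)) N, g n
    = g 0 + ∑ j ∈ Finset.range N, (g ((j:ℤ)+1) + g (-((j:ℤ)+1))) := by
  intro N
  induction N with
  | zero => simp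
  | succ N ih =>
    have hset : Finset.Icc (-((N+1:ℕ):ℤ)) ((N+1:ℕ):ℤ)
        = insert (-((N:ℤ)+1)) (insert ((N:ℤ)+1) (Finset.Icc (-(N:ℤ)) N)) := by
      ext n; simp only [Finset.mem_Icc, Finset.mem_insert]; omega
    rw [hset, Finset.sum_insert (by simp only [Finset.mem_insert, Finset.mem_Icc]; omega),
      Finset.sum_insert (by simp only [Finset.mem_Icc]; omega), ih, Finset.sum_range_succ]
    ring

lemma rpow_exp_le (b : ℝ) (hb : 0 < b) : b ^ ((3:ℝ)/2) * Real.exp (-b) ≤ 4 := by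
  rcases le_or_gt b 1 with h1 | h1
  · have h2 : b ^ ((3:ℝ)/2) ≤ 1 := Real.rpow_le_one hb.le h1 (by norm_num)
    have h3 : Real.exp (-b) ≤ 1 := Real.exp_le_one_iff.2 (by linarith)
    nlinarith [Real.exp_pos (-b), Real.rpow_nonneg hb.le ((3:ℝ)/2)]
  · have h2 : b ^ ((3:ℝ)/2) ≤ b ^ (2:ℝ) :=
      Real.rpow_le_rpow_of_exponent_le h1.le (by norm_num)
    have h3 : b ^ (2:ℝ) = b ^ 2 := by
      rw [← Real.rpow_natCast b 2]; norm_num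
    have h4 : b ^ 2 ≤ 4 * Real.exp b := by
      have h5 := Real.add_one_le_exp (b/2)
      have h6 : Real.exp b = Real.exp (b/2) * Real.exp (b/2) := by
        rw [← Real.exp_add]; ring_nf
      nlinarith [Real.exp_pos (b/2)]
    have h7 : Real.exp (-b) = (Real.exp b)⁻¹ := Real.exp_neg b
    have h8 : 0 < Real.exp b := Real.exp_pos b
    calc b ^ ((3:ℝ)/2) * Real.exp (-b) ≤ b ^ 2 * Real.exp (-b) := by
          rw [← h3]; exact mul_le_mul_of_nonneg_right h2 (Real.exp_pos _).le
      _ ≤ (4 * Real.exp b) * (Real.exp b)⁻¹ := by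
          rw [h7]; exact mul_le_mul_of_nonneg_right h4 (by positivity)
      _ = 4 := by field_simp

set_option maxHeartbeats 1000000 in
/-- uniform bound `ε³ Σ_{0<ε|k|<δ} e^{-ε²|k|²t} ≤ C (1+t)^{-3/2}`. -/
theorem lattice_gaussian_sum_decay :
    ∀ δ : ℝ, 0 < δ → ∃ C > (0:ℝ), ∀ ε : ℝ, 0 < ε → ∀ t : ℝ, 0 ≤ t →
      ε ^ 3 * (∑' k : Fin 3 → ℤ,
          if 0 < ε * znorm k ∧ ε * znorm k < δ then Real.exp (-(ε ^ 2 * znorm k ^ 2 * t)) else 0)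
        ≤ C * (1 + t) ^ (-(3:ℝ)/2) := by
  intro δ hδ
  have hsqrt2 : (0:ℝ) ≤ Real.sqrt 2 := Real.sqrt_nonneg 2
  have h2pi : (0:ℝ) ≤ (2*Real.pi) ^ ((3:ℝ)/2) := Real.rpow_nonneg (by positivity) _
  refine ⟨(125 * δ^3 + 32 * Real.sqrt 2 + 4 * (2*Real.pi) ^ ((3:ℝ)/2) + 1) * 2 ^ ((3:ℝ)/2),
    by positivity, ?_⟩
  set A : ℝ := 125 * δ^3 + 32 * Real.sqrt 2 + 4 * (2*Real.pi) ^ ((3:ℝ)/2) + 1 with hA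
  have hApos : 0 < A := by positivity
  intro ε hε t ht
  have h1t : (0:ℝ) < 1 + t := by linarith
  have hRpos : 0 < (1+t) ^ (-(3:ℝ)/2) := Real.rpow_pos_of_pos h1t _
  set f : (Fin 3 → ℤ) → ℝ := fun k =>
    if 0 < ε * znorm k ∧ ε * znorm k < δ then Real.exp (-(ε ^ 2 * znorm k ^ 2 * t)) else 0
    with hfdef
  by_cases hex : ∃ k : Fin 3 → ℤ, 0 < ε * znorm k ∧ ε * znorm k < δ
  swap
  · have hz : (∑' k, f k) = 0 := by
      have h0 : ∀ k, f k = 0 := fun k => if_neg (fun h => hex ⟨k, h⟩)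
      simp [h0]
    rw [hz, mul_zero]
    positivity
  have hzn : ∀ k : Fin 3 → ℤ, 0 ≤ znorm k := fun k => Real.sqrt_nonneg _
  have hsq : ∀ k : Fin 3 → ℤ, znorm k ^ 2 = ∑ i, ((k i : ℝ))^2 :=
    fun k => Real.sq_sqrt (by positivity)
  have hone : ∀ k : Fin 3 → ℤ, 0 < znorm k → 1 ≤ znorm k := by
    intro k hk
    have hS : 0 < ∑ i, ((k i : ℝ))^2 := Real.sqrt_pos.mp hk
    have hex2 : ∃ i, k i ≠ 0 := by
      by_contra hc
      push_neg at hc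
      simp [hc] at hS
    obtain ⟨i, hi⟩ := hex2
    have h1 : (1:ℝ) ≤ ((k i : ℝ))^2 := by
      have h0 : (1:ℤ) ≤ (k i)^2 := by rcases lt_or_gt_of_ne hi with h|h <;> nlinarith
      exact_mod_cast h0
    have hS1 : (1:ℝ) ≤ ∑ j, ((k j : ℝ))^2 :=
      le_trans h1 (Finset.single_le_sum (f := fun j => ((k j : ℝ))^2) (fun j _ => sq_nonneg _) (Finset.mem_univ i))
    calc (1:ℝ) = Real.sqrt 1 := Real.sqrt_one.symm
      _ ≤ znorm k := Real.sqrt_le_sqrt hS1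
  obtain ⟨k₀, hk₀⟩ := hex
  have hzk₀ : 0 < znorm k₀ := by
    rcases hk₀ with ⟨h1, _⟩
    nlinarith [hzn k₀]
  have hεδ : ε < δ := by
    have h1 := hone k₀ hzk₀
    calc ε = ε * 1 := (mul_one ε).symm
      _ ≤ ε * znorm k₀ := by nlinarith
      _ < δ := hk₀.2
  set N : ℕ := ⌈δ / ε⌉₊ with hNdef
  set T : Finset ℤ := Finset.Icc (-(N:ℤ)) N with hTdef
  have hmem : ∀ k : Fin 3 → ℤ, (0 < ε * znorm k ∧ ε * znorm k < δ) →
      k ∈ Fintype.piFinset (fun _ : Fin 3 => T) := by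
    intro k hk
    rw [Fintype.mem_piFinset]
    intro i
    rw [hTdef, Finset.mem_Icc]
    have hzN : znorm k ≤ (N:ℝ) := by
      have h1 : znorm k < δ / ε := by
        rw [lt_div_iff₀ hε]
        nlinarith [hk.2]
      exact le_trans h1.le (Nat.le_ceil _)
    have habs : |((k i : ℝ))| ≤ znorm k := by
      rw [← Real.sqrt_sq_eq_abs]
      exact Real.sqrt_le_sqrt (Finset.single_le_sum (fun j _ => sq_nonneg ((k j : ℝ))) (Finset.mem_univ i))
    have h2 : |((k i : ℝ))| ≤ (N:ℝ) := le_trans habs hzN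
    rw [abs_le] at h2
    constructor
    · exact_mod_cast h2.1
    · exact_mod_cast h2.2
  have hf0 : ∀ k ∉ Fintype.piFinset (fun _ : Fin 3 => T), f k = 0 :=
    fun k hk => if_neg (fun h => hk (hmem k h))
  have htsum : ∑' k, f k = ∑ k ∈ Fintype.piFinset (fun _ : Fin 3 => T), f k := tsum_eq_sum hf0
  have hfnonneg : ∀ k, 0 ≤ f k := by
    intro k
    rw [hfdef]
    dsimp only
    split_ifs
    · exact (Real.exp_pos _).le
    · exact le_refl 0
  have hcardT : ((T.card : ℕ) : ℝ) = 2*(N:ℝ)+1 := by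
    rw [hTdef, Int.card_Icc]
    have h0 : ((N:ℤ) + 1 - (-(N:ℤ))).toNat = 2*N+1 := by omega
    rw [h0]; push_cast; ring
  have hN1 : ε * (2*(N:ℝ)+1) ≤ 5*δ := by
    have h1 : (N:ℝ) < δ/ε + 1 := Nat.ceil_lt_add_one (by positivity)
    have h2 : (1:ℝ) ≤ δ/ε := (one_le_div hε).2 hεδ.le
    have h3 : ε * (δ/ε) = δ := by field_simp
    nlinarith [mul_lt_mul_of_pos_left h1 hε, mul_le_mul_of_nonneg_left h2 hε.le]
  rcases le_or_gt t 1 with ht1 | ht1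
  · -- small time branch
    have hfle1 : ∀ k ∈ Fintype.piFinset (fun _ : Fin 3 => T), f k ≤ 1 := by
      intro k _
      rw [hfdef]
      dsimp only
      split_ifs with h
      · apply Real.exp_le_one_iff.2
        have : 0 ≤ ε^2 * znorm k^2 * t := by positivity
        linarith
      · norm_num
    have hsum : (∑ k ∈ Fintype.piFinset (fun _ : Fin 3 => T), f k) ≤ ((T.card : ℕ) : ℝ)^3 := by
      calc ∑ k ∈ Fintype.piFinset (fun _ : Fin 3 => T), f k
          ≤ ∑ _k ∈ Fintype.piFinset (fun _ : Fin 3 => T), (1:ℝ) :=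
            Finset.sum_le_sum hfle1
        _ = ((Fintype.piFinset (fun _ : Fin 3 => T)).card : ℝ) := by simp
        _ = ((T.card : ℕ) : ℝ)^3 := by
            rw [Fintype.card_piFinset]
            push_cast
            simp [Finset.prod_const]
    have hmain : ε^3 * (∑ k ∈ Fintype.piFinset (fun _ : Fin 3 => T), f k) ≤ 125*δ^3 := by
      have h6 : (ε*((T.card : ℕ):ℝ))^3 ≤ (5*δ)^3 := by
        apply pow_le_pow_left₀ (by positivity)
        rw [hcardT]; exact hN1
      calc ε^3 * (∑ k ∈ Fintype.piFinset (fun _ : Fin 3 => T), f k)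
          ≤ ε^3 * ((T.card:ℕ):ℝ)^3 := by
            apply mul_le_mul_of_nonneg_left hsum (by positivity)
        _ = (ε*((T.card:ℕ):ℝ))^3 := by ring
        _ ≤ (5*δ)^3 := h6
        _ = 125*δ^3 := by ring
    have h2le : (2:ℝ)^(-(3:ℝ)/2) ≤ (1+t)^(-(3:ℝ)/2) :=
      Real.rpow_le_rpow_of_nonpos h1t (by linarith) (by norm_num)
    have hC2 : A * 2^((3:ℝ)/2) * (2:ℝ)^(-(3:ℝ)/2) = A := by
      rw [mul_assoc, ← Real.rpow_add two_pos]
      norm_num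
    calc ε^3 * (∑' k, f k) = ε^3 * ∑ k ∈ Fintype.piFinset (fun _ : Fin 3 => T), f k := by
          rw [htsum]
      _ ≤ 125*δ^3 := hmain
      _ ≤ A := by rw [hA]; nlinarith
      _ = A * 2^((3:ℝ)/2) * 2^(-(3:ℝ)/2) := hC2.symm
      _ ≤ A * 2^((3:ℝ)/2) * (1+t)^(-(3:ℝ)/2) := by
          apply mul_le_mul_of_nonneg_left h2le (by positivity)
  · -- large time branch
    have htpos : 0 < t := lt_trans one_pos ht1
    set b := ε^2*t/2 with hbdef
    have hb : 0 < b := by rw [hbdef]; positivity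
    have hterm : ∀ k ∈ Fintype.piFinset (fun _ : Fin 3 => T),
        f k ≤ Real.exp (-b) * ∏ i : Fin 3, Real.exp (-b*((k i:ℝ))^2) := by
      intro k _
      rw [hfdef]
      dsimp only
      split_ifs with h
      · have hzk1 : 1 ≤ znorm k := hone k (by nlinarith [h.1, hzn k])
        have hz2 : 1 ≤ znorm k^2 := by nlinarith
        have hrw : ∏ i : Fin 3, Real.exp (-b*((k i:ℝ))^2) = Real.exp (-(b * znorm k^2)) := by
          rw [← Real.exp_sum]
          congr 1
          rw [hsq k, Finset.mul_sum]
          simp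
        rw [hrw, ← Real.exp_add]
        apply Real.exp_le_exp.2
        have hbt : ε^2 * t = 2*b := by rw [hbdef]; ring
        nlinarith [mul_nonneg hb.le (sub_nonneg.2 hz2)]
      · have : (0:ℝ) < Real.exp (-b) * ∏ i : Fin 3, Real.exp (-b*((k i:ℝ))^2) := by
          positivity
        linarith
    have hprodsum : ∑ k ∈ Fintype.piFinset (fun _ : Fin 3 => T),
        ∏ i : Fin 3, Real.exp (-b*((k i:ℝ))^2)
        = (∑ n ∈ T, Real.exp (-b*((n:ℤ):ℝ)^2))^3 := by
      rw [← Finset.prod_univ_sum (fun _ : Fin 3 => T) (fun _ n => Real.exp (-b*((n:ℤ):ℝ)^2))]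
      simp [Finset.prod_const]
    have hTsum : (∑ n ∈ T, Real.exp (-b*((n:ℤ):ℝ)^2)) ≤ 1 + Real.sqrt (Real.pi/b) := by
      rw [hTdef, sum_Icc_int (fun n : ℤ => Real.exp (-b*((n:ℤ):ℝ)^2)) N]
      have hg0 : Real.exp (-b*(((0:ℤ)):ℝ)^2) = 1 := by norm_num
      have heq : ∀ j ∈ Finset.range N,
          (Real.exp (-b*((((j:ℤ)+1):ℤ):ℝ)^2) + Real.exp (-b*(((-((j:ℤ)+1)):ℤ):ℝ)^2))
          = 2*Real.exp (-b*((j:ℝ)+1)^2) := by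
        intro j _
        have h1 : ((((j:ℤ)+1):ℤ):ℝ) = (j:ℝ)+1 := by push_cast; ring
        have h2 : (((-((j:ℤ)+1)):ℤ):ℝ)^2 = ((j:ℝ)+1)^2 := by push_cast; ring
        rw [h2, h1]; ring
      rw [Finset.sum_congr rfl heq, hg0]
      have := gauss_sum_le b hb N
      rw [← Finset.mul_sum]
      linarith
    have hsumg0 : 0 ≤ ∑ n ∈ T, Real.exp (-b*((n:ℤ):ℝ)^2) :=
      Finset.sum_nonneg fun n _ => (Real.exp_pos _).le
    have hsum2 : (∑ k ∈ Fintype.piFinset (fun _ : Fin 3 => T), f k)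
        ≤ Real.exp (-b) * (1 + Real.sqrt (Real.pi/b))^3 := by
      calc ∑ k ∈ Fintype.piFinset (fun _ : Fin 3 => T), f k
          ≤ ∑ k ∈ Fintype.piFinset (fun _ : Fin 3 => T),
              Real.exp (-b) * ∏ i : Fin 3, Real.exp (-b*((k i:ℝ))^2) :=
            Finset.sum_le_sum hterm
        _ = Real.exp (-b) * (∑ n ∈ T, Real.exp (-b*((n:ℤ):ℝ)^2))^3 := by
            rw [← Finset.mul_sum, hprodsum]
        _ ≤ Real.exp (-b) * (1 + Real.sqrt (Real.pi/b))^3 := by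
            apply mul_le_mul_of_nonneg_left (pow_le_pow_left₀ hsumg0 hTsum 3) (Real.exp_pos _).le
    set s := Real.sqrt (Real.pi/b) with hsdef
    have hs0 : 0 ≤ s := Real.sqrt_nonneg _
    have hcube : (1+s)^3 ≤ 4*(1+s^3) := by
      nlinarith [mul_nonneg (sq_nonneg (1-s)) hs0, sq_nonneg (1-s), sq_nonneg s]
    have hε2 : ε^2 = 2*b/t := by rw [hbdef]; field_simp
    have hε3 : ε^3 = 2^((3:ℝ)/2) * b^((3:ℝ)/2) * t^(-(3:ℝ)/2) := by
      have h1 : ε^3 = (ε^2)^((3:ℝ)/2) := by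
        rw [← Real.rpow_natCast ε 2, ← Real.rpow_mul hε.le, ← Real.rpow_natCast ε 3]
        norm_num
      rw [h1, hε2, div_eq_mul_inv, Real.mul_rpow (by positivity) (by positivity),
        Real.mul_rpow (by norm_num) hb.le, Real.inv_rpow htpos.le, ← Real.rpow_neg htpos.le]
      ring_nf
    have hbexp : b^((3:ℝ)/2) * Real.exp (-b) ≤ 4 := rpow_exp_le b hb
    have htneg : (0:ℝ) < t^(-(3:ℝ)/2) := Real.rpow_pos_of_pos htpos _
    have key1 : ε^3 * Real.exp (-b) ≤ 2^((3:ℝ)/2) * 4 * t^(-(3:ℝ)/2) := by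
      rw [hε3]
      calc 2^((3:ℝ)/2) * b^((3:ℝ)/2) * t^(-(3:ℝ)/2) * Real.exp (-b)
          = (2^((3:ℝ)/2) * t^(-(3:ℝ)/2)) * (b^((3:ℝ)/2) * Real.exp (-b)) := by ring
        _ ≤ (2^((3:ℝ)/2) * t^(-(3:ℝ)/2)) * 4 := by
            apply mul_le_mul_of_nonneg_left hbexp (by positivity)
        _ = 2^((3:ℝ)/2) * 4 * t^(-(3:ℝ)/2) := by ring
    have hεs : ε * s = Real.sqrt (2*Real.pi/t) := by
      rw [hsdef, ← Real.sqrt_sq hε.le, ← Real.sqrt_mul (sq_nonneg ε)]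
      congr 1
      rw [hε2]
      field_simp
    have key2' : (ε*s)^3 = (2*Real.pi)^((3:ℝ)/2) * t^(-(3:ℝ)/2) := by
      rw [hεs, ← Real.rpow_natCast (Real.sqrt (2*Real.pi/t)) 3, Real.sqrt_eq_rpow,
        ← Real.rpow_mul (by positivity)]
      norm_num
      rw [Real.div_rpow (by positivity) htpos.le, Real.rpow_neg htpos.le, div_eq_mul_inv]
    have key2 : ε^3 * (Real.exp (-b) * s^3) ≤ (2*Real.pi)^((3:ℝ)/2) * t^(-(3:ℝ)/2) := by
      have he1 : Real.exp (-b) ≤ 1 := Real.exp_le_one_iff.2 (by linarith)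
      have h1 : ε^3 * (Real.exp (-b) * s^3) ≤ (ε*s)^3 := by
        rw [mul_pow]
        nlinarith [pow_nonneg hε.le 3, pow_nonneg hs0 3, Real.exp_pos (-b),
          mul_nonneg (pow_nonneg hε.le 3) (pow_nonneg hs0 3)]
      rw [key2'] at h1
      exact h1
    have hts : t^(-(3:ℝ)/2) ≤ 2^((3:ℝ)/2) * (1+t)^(-(3:ℝ)/2) := by
      have h1 : (1+t) ≤ 2*t := by linarith
      have h2 : (2*t)^(-(3:ℝ)/2) ≤ (1+t)^(-(3:ℝ)/2) :=
        Real.rpow_le_rpow_of_nonpos h1t h1 (by norm_num)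
      have h3 : (2*t)^(-(3:ℝ)/2) = 2^(-(3:ℝ)/2) * t^(-(3:ℝ)/2) :=
        Real.mul_rpow (by norm_num) htpos.le
      have h4 : (2:ℝ)^((3:ℝ)/2) * 2^(-(3:ℝ)/2) = 1 := by
        rw [← Real.rpow_add two_pos]; norm_num
      calc t^(-(3:ℝ)/2) = 2^((3:ℝ)/2) * (2^(-(3:ℝ)/2) * t^(-(3:ℝ)/2)) := by
            rw [← mul_assoc, h4, one_mul]
        _ = 2^((3:ℝ)/2) * (2*t)^(-(3:ℝ)/2) := by rw [h3]
        _ ≤ 2^((3:ℝ)/2) * (1+t)^(-(3:ℝ)/2) := by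
            apply mul_le_mul_of_nonneg_left h2 (by positivity)
    have h32 : (2:ℝ)^((3:ℝ)/2) = 2*Real.sqrt 2 := by
      rw [show (3:ℝ)/2 = 1 + 1/2 by norm_num, Real.rpow_add two_pos, Real.rpow_one,
        ← Real.sqrt_eq_rpow]
    calc ε^3 * (∑' k, f k) = ε^3 * ∑ k ∈ Fintype.piFinset (fun _ : Fin 3 => T), f k := by
          rw [htsum]
      _ ≤ ε^3 * (Real.exp (-b) * (1+s)^3) := by
          apply mul_le_mul_of_nonneg_left hsum2 (by positivity)
      _ ≤ ε^3 * (Real.exp (-b) * (4*(1+s^3))) := by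
          apply mul_le_mul_of_nonneg_left _ (by positivity)
          exact mul_le_mul_of_nonneg_left hcube (Real.exp_pos _).le
      _ = 4*(ε^3 * Real.exp (-b)) + 4*(ε^3 * (Real.exp (-b) * s^3)) := by ring
      _ ≤ 4*(2^((3:ℝ)/2) * 4 * t^(-(3:ℝ)/2)) + 4*((2*Real.pi)^((3:ℝ)/2) * t^(-(3:ℝ)/2)) := by
          have := mul_le_mul_of_nonneg_left key1 (by norm_num : (0:ℝ) ≤ 4)
          have := mul_le_mul_of_nonneg_left key2 (by norm_num : (0:ℝ) ≤ 4)
          linarith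
      _ = (16*2^((3:ℝ)/2) + 4*(2*Real.pi)^((3:ℝ)/2)) * t^(-(3:ℝ)/2) := by ring
      _ ≤ (16*2^((3:ℝ)/2) + 4*(2*Real.pi)^((3:ℝ)/2)) * (2^((3:ℝ)/2) * (1+t)^(-(3:ℝ)/2)) := by
          apply mul_le_mul_of_nonneg_left hts (by positivity)
      _ = (16*2^((3:ℝ)/2) + 4*(2*Real.pi)^((3:ℝ)/2)) * 2^((3:ℝ)/2) * (1+t)^(-(3:ℝ)/2) := by
          ring
      _ ≤ A * 2^((3:ℝ)/2) * (1+t)^(-(3:ℝ)/2) := by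
          apply mul_le_mul_of_nonneg_right _ hRpos.le
          apply mul_le_mul_of_nonneg_right _ (by positivity)
          rw [hA, h32]
          nlinarith [pow_pos hδ 3]

end
end
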